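/- arXiv:2008.08921 — 6 statements merged into one kernel-verified Lean document; each statement's English description precedes it below -/
import Mathlib

section
/- Let Rc ∈ SO(3) and θ ∈ (0, π/2), and let S := S(Rc, θ) be the open cell of radius θ about Rc. Let R₁, R₂ ∈ S and let V be a real skew-symmetric 3×3 matrix such that exp(V) = R₁ᵀR₂ and ‖V^∨‖₂ = d(R₁, R₂). Then for every τ ∈ [0,1], the geodesic point R₁·exp(τ·V) belongs to S. -/
open Matrix Real Set

noncomputable section

abbrev M3 := Matrix (Fin 3) (Fin 3) ℝ

/-- `R` is a rotation matrix: `RᵀR = I` and `det R = 1`. -/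
def SO3 (R : M3) : Prop := Rᵀ * R = 1 ∧ R.det = 1

/-- Angular distance `d(R₁,R₂) = arccos((tr(R₁ᵀR₂) − 1)/2)`. -/
noncomputable def aDist (R₁ R₂ : M3) : ℝ := Real.arccos ((Matrix.trace (R₁ᵀ * R₂) - 1) / 2)

/-- Open cell of radius `θ` about `Rc` (inside `SO(3)`). -/
def cell (Rc : M3) (θ : ℝ) : Set M3 := {R | SO3 R ∧ aDist Rc R < θ}

/-- Matrix exponential. -/
noncomputable def mExp (A : M3) : M3 := NormedSpace.exp A

/-- Logarithm on `SO(3)`: `Log R = (θ(R)/(2 sin θ(R)))·(R − Rᵀ)` for `R ≠ I`, `Log I = 0`,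
with `θ(R) = arccos((tr R − 1)/2)`. -/
noncomputable def mLog (R : M3) : M3 :=
  if R = 1 then 0
  else (Real.arccos ((Matrix.trace R - 1) / 2) /
      (2 * Real.sin (Real.arccos ((Matrix.trace R - 1) / 2)))) • (R - Rᵀ)

/-- The `vee` map: `A^∨ = (A₃₂, A₁₃, A₂₁)`. -/
def vee (A : M3) : Fin 3 → ℝ := ![A 2 1, A 0 2, A 1 0]

/-- Euclidean 2-norm on `ℝ³`. -/
noncomputable def norm2 (v : Fin 3 → ℝ) : ℝ := Real.sqrt (∑ i, v i ^ 2)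

/-- Frobenius norm `‖A‖_F = √(tr(AᵀA))`. -/
noncomputable def frob (A : M3) : ℝ := Real.sqrt (Matrix.trace (Aᵀ * A))

/- helpers -/

lemma entry_eq {A B : M3} (h : A = B) (i j : Fin 3) : A i j = B i j := by rw [h]

lemma arccos_lt_elim {y θ : ℝ} (hθπ : θ ≤ π) (h : Real.arccos y < θ) : Real.cos θ < y := by
  by_cases hy1 : 1 ≤ y
  · have h0 : 0 < θ := lt_of_le_of_lt (Real.arccos_nonneg y) h
    have := Real.cos_lt_cos_of_nonneg_of_le_pi le_rfl hθπ h0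
    simp only [Real.cos_zero] at this
    linarith
  · by_cases hy2 : y ≤ -1
    · exfalso
      have : Real.arccos y = π := Real.arccos_eq_pi.2 hy2
      linarith
    · have := Real.cos_lt_cos_of_nonneg_of_le_pi (Real.arccos_nonneg y) hθπ h
      rwa [Real.cos_arccos (by linarith) (by linarith)] at this

lemma arccos_lt_intro {y θ : ℝ} (hθ0 : 0 ≤ θ) (hθπ : θ ≤ π) (hy1 : y ≤ 1)
    (h : Real.cos θ < y) : Real.arccos y < θ := by
  have h1 : Real.arccos y < Real.arccos (Real.cos θ) := by
    apply Real.strictAntiOn_arccos _ _ h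
    · constructor
      · exact Real.neg_one_le_cos θ
      · exact Real.cos_le_one θ
    · exact ⟨by linarith [Real.neg_one_le_cos θ], hy1⟩
  rwa [Real.arccos_cos hθ0 hθπ] at h1

/- scalar geometry core -/

lemma combo_lemma (t u A f L S : ℝ) (ht : 0 ≤ t) (hu : 0 ≤ u) (hS : 0 < S)
    (hsum : S ≤ t + u) (hL0 : 0 ≤ L) (hA : L < A) (hf : L < f) :
    S * L < t * A + u * f := by
  have hm : 0 < min (A - L) (f - L) := lt_min (by linarith) (by linarith)
  have e1 : t * min (A - L) (f - L) ≤ t * (A - L) :=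
    mul_le_mul_of_nonneg_left (min_le_left _ _) ht
  have e2 : u * min (A - L) (f - L) ≤ u * (f - L) :=
    mul_le_mul_of_nonneg_left (min_le_right _ _) hu
  have e3 : 0 < (t + u) * min (A - L) (f - L) := mul_pos (by linarith) hm
  have e4 : (t + u) * min (A - L) (f - L)
      = t * min (A - L) (f - L) + u * min (A - L) (f - L) := by ring
  have e5 : S * L ≤ (t + u) * L := mul_le_mul_of_nonneg_right hsum hL0
  have e6 : t * A + u * f = t * (A - L) + u * (f - L) + (t + u) * L := by ring
  linarith

lemma core_lemma (A B L x x₁ : ℝ) (hAB : A ^ 2 + B ^ 2 ≤ 1) (hL2 : 1 / 2 < L ^ 2)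
    (hL0 : 0 ≤ L) (hx0 : 0 ≤ x) (hxx : x ≤ x₁) (hx1 : x₁ ≤ π / 2)
    (h0 : L < A) (h1 : L ^ 2 < (A * Real.cos x₁ - B * Real.sin x₁) ^ 2) :
    L < A * Real.cos x - B * Real.sin x := by
  have hπ := Real.pi_pos
  have hsx : 0 ≤ Real.sin x := Real.sin_nonneg_of_nonneg_of_le_pi hx0 (by linarith)
  have hsx' : 0 ≤ Real.sin (x₁ - x) :=
    Real.sin_nonneg_of_nonneg_of_le_pi (by linarith) (by linarith)
  have hsx1 : 0 ≤ Real.sin x₁ := Real.sin_nonneg_of_nonneg_of_le_pi (by linarith) (by linarith)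
  have hcx1 : 0 ≤ Real.cos x₁ := Real.cos_nonneg_of_mem_Icc ⟨by linarith, hx1⟩
  have hsum : Real.sin x₁ ≤ Real.sin (x₁ - x) + Real.sin x := by
    have hadd : Real.sin ((x₁ - x) + x) = Real.sin (x₁ - x) * Real.cos x
        + Real.cos (x₁ - x) * Real.sin x := Real.sin_add _ _
    have h1 := Real.cos_le_one x
    have h2 := Real.cos_le_one (x₁ - x)
    have h3 : x₁ - x + x = x₁ := by ring
    rw [h3] at hadd
    nlinarith
  have hB2 : B ^ 2 < L ^ 2 := by nlinarith
  have hsle1 : Real.sin x₁ ≤ 1 := Real.sin_le_one x₁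
  have hfx1pos : L < A * Real.cos x₁ - B * Real.sin x₁ := by
    rcases lt_or_ge L (A * Real.cos x₁ - B * Real.sin x₁) with hlt | hle
    · exact hlt
    · exfalso
      have hneg : A * Real.cos x₁ - B * Real.sin x₁ < -L := by nlinarith
      have hApos : 0 ≤ A * Real.cos x₁ := mul_nonneg (by linarith) hcx1
      have hLpos : 0 < L := by nlinarith
      have hBs : L < B * Real.sin x₁ := by linarith
      have h2 : L ^ 2 < (B * Real.sin x₁) ^ 2 := by nlinarith
      have h3 : (B * Real.sin x₁) ^ 2 ≤ B ^ 2 := by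
        nlinarith [mul_nonneg (sq_nonneg B) (by nlinarith [sq_nonneg (Real.sin x₁)] :
          (0:ℝ) ≤ 1 - Real.sin x₁ ^ 2)]
      linarith
  have hiden : Real.sin x₁ * (A * Real.cos x - B * Real.sin x)
      = Real.sin (x₁ - x) * A + Real.sin x * (A * Real.cos x₁ - B * Real.sin x₁) := by
    rw [Real.sin_sub]; ring
  rcases eq_or_lt_of_le hsx1 with heq | hpos
  · -- sin x₁ = 0 forces x₁ = 0 hence x = 0
    have hx10 : x₁ = 0 := by
      by_contra hne
      have : 0 < x₁ := lt_of_le_of_ne (le_trans hx0 hxx) (Ne.symm hne)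
      have := Real.sin_pos_of_pos_of_lt_pi this (by linarith)
      linarith
    have hx00 : x = 0 := le_antisymm (by linarith) hx0
    simp [hx00]; linarith
  · have key : Real.sin x₁ * L < Real.sin x₁ * (A * Real.cos x - B * Real.sin x) := by
      rw [hiden]
      exact combo_lemma _ _ _ _ _ _ hsx' hsx hpos hsum hL0 h0 hfx1pos
    exact (mul_lt_mul_iff_right₀ hpos).mp key

lemma sq_core_lemma (A B L x x₁ : ℝ) (hAB : A ^ 2 + B ^ 2 ≤ 1) (hL2 : 1 / 2 < L ^ 2)
    (hL0 : 0 ≤ L) (hx0 : 0 ≤ x) (hxx : x ≤ x₁) (hx1 : x₁ ≤ π / 2)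
    (h0 : L ^ 2 < A ^ 2) (h1 : L ^ 2 < (A * Real.cos x₁ - B * Real.sin x₁) ^ 2) :
    L ^ 2 < (A * Real.cos x - B * Real.sin x) ^ 2 := by
  rcases le_or_gt A 0 with hA | hA
  · have h0' : L < -A := by nlinarith
    have h1' : L ^ 2 < ((-A) * Real.cos x₁ - (-B) * Real.sin x₁) ^ 2 := by nlinarith [h1]
    have := core_lemma (-A) (-B) L x x₁ (by nlinarith) hL2 hL0 hx0 hxx hx1 h0' h1'
    nlinarith
  · have h0' : L < A := by nlinarith
    have := core_lemma A B L x x₁ hAB hL2 hL0 hx0 hxx hx1 h0' h1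
    nlinarith
lemma so3_trace_identity (Q : M3) (hcol : Qᵀ * Q = 1) (hrow : Q * Qᵀ = 1)
    (hadj : Q.adjugate = Qᵀ) (x y z : ℝ) :
    (x * (Q 2 1 - Q 1 2) + y * (Q 0 2 - Q 2 0) + z * (Q 1 0 - Q 0 1)) ^ 2
      = (Q 0 0 + Q 1 1 + Q 2 2 + 1) *
        (2 * (x * (Q 0 0 * x + Q 0 1 * y + Q 0 2 * z) + y * (Q 1 0 * x + Q 1 1 * y + Q 1 2 * z)
            + z * (Q 2 0 * x + Q 2 1 * y + Q 2 2 * z))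
          + (1 - (Q 0 0 + Q 1 1 + Q 2 2)) * (x ^ 2 + y ^ 2 + z ^ 2)) := by
  have c00 : Q 0 0 * Q 0 0 + Q 1 0 * Q 1 0 + Q 2 0 * Q 2 0 = 1 := by
    simpa [Matrix.mul_apply, Fin.sum_univ_three, Matrix.one_apply] using entry_eq hcol 0 0
  have c01 : Q 0 0 * Q 0 1 + Q 1 0 * Q 1 1 + Q 2 0 * Q 2 1 = 0 := by
    simpa [Matrix.mul_apply, Fin.sum_univ_three, Matrix.one_apply] using entry_eq hcol 0 1
  have c02 : Q 0 0 * Q 0 2 + Q 1 0 * Q 1 2 + Q 2 0 * Q 2 2 = 0 := by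
    simpa [Matrix.mul_apply, Fin.sum_univ_three, Matrix.one_apply] using entry_eq hcol 0 2
  have c11 : Q 0 1 * Q 0 1 + Q 1 1 * Q 1 1 + Q 2 1 * Q 2 1 = 1 := by
    simpa [Matrix.mul_apply, Fin.sum_univ_three, Matrix.one_apply] using entry_eq hcol 1 1
  have c12 : Q 0 1 * Q 0 2 + Q 1 1 * Q 1 2 + Q 2 1 * Q 2 2 = 0 := by
    simpa [Matrix.mul_apply, Fin.sum_univ_three, Matrix.one_apply] using entry_eq hcol 1 2
  have c22 : Q 0 2 * Q 0 2 + Q 1 2 * Q 1 2 + Q 2 2 * Q 2 2 = 1 := by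
    simpa [Matrix.mul_apply, Fin.sum_univ_three, Matrix.one_apply] using entry_eq hcol 2 2
  have r00 : Q 0 0 * Q 0 0 + Q 0 1 * Q 0 1 + Q 0 2 * Q 0 2 = 1 := by
    simpa [Matrix.mul_apply, Fin.sum_univ_three, Matrix.one_apply] using entry_eq hrow 0 0
  have r01 : Q 0 0 * Q 1 0 + Q 0 1 * Q 1 1 + Q 0 2 * Q 1 2 = 0 := by
    simpa [Matrix.mul_apply, Fin.sum_univ_three, Matrix.one_apply] using entry_eq hrow 0 1
  have r02 : Q 0 0 * Q 2 0 + Q 0 1 * Q 2 1 + Q 0 2 * Q 2 2 = 0 := by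
    simpa [Matrix.mul_apply, Fin.sum_univ_three, Matrix.one_apply] using entry_eq hrow 0 2
  have r11 : Q 1 0 * Q 1 0 + Q 1 1 * Q 1 1 + Q 1 2 * Q 1 2 = 1 := by
    simpa [Matrix.mul_apply, Fin.sum_univ_three, Matrix.one_apply] using entry_eq hrow 1 1
  have r12 : Q 1 0 * Q 2 0 + Q 1 1 * Q 2 1 + Q 1 2 * Q 2 2 = 0 := by
    simpa [Matrix.mul_apply, Fin.sum_univ_three, Matrix.one_apply] using entry_eq hrow 1 2
  have r22 : Q 2 0 * Q 2 0 + Q 2 1 * Q 2 1 + Q 2 2 * Q 2 2 = 1 := by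
    simpa [Matrix.mul_apply, Fin.sum_univ_three, Matrix.one_apply] using entry_eq hrow 2 2
  have a00 : Q 1 1 * Q 2 2 - Q 1 2 * Q 2 1 = Q 0 0 := by
    simpa [Matrix.adjugate_fin_three] using entry_eq hadj 0 0
  have a01 : -(Q 0 1 * Q 2 2) + Q 0 2 * Q 2 1 = Q 1 0 := by
    simpa [Matrix.adjugate_fin_three] using entry_eq hadj 0 1
  have a02 : Q 0 1 * Q 1 2 - Q 0 2 * Q 1 1 = Q 2 0 := by
    simpa [Matrix.adjugate_fin_three] using entry_eq hadj 0 2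
  have a10 : -(Q 1 0 * Q 2 2) + Q 1 2 * Q 2 0 = Q 0 1 := by
    simpa [Matrix.adjugate_fin_three] using entry_eq hadj 1 0
  have a11 : Q 0 0 * Q 2 2 - Q 0 2 * Q 2 0 = Q 1 1 := by
    simpa [Matrix.adjugate_fin_three] using entry_eq hadj 1 1
  have a12 : -(Q 0 0 * Q 1 2) + Q 0 2 * Q 1 0 = Q 2 1 := by
    simpa [Matrix.adjugate_fin_three] using entry_eq hadj 1 2
  have a20 : Q 1 0 * Q 2 1 - Q 1 1 * Q 2 0 = Q 0 2 := by
    simpa [Matrix.adjugate_fin_three] using entry_eq hadj 2 0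
  have a21 : -(Q 0 0 * Q 2 1) + Q 0 1 * Q 2 0 = Q 1 2 := by
    simpa [Matrix.adjugate_fin_three] using entry_eq hadj 2 1
  have a22 : Q 0 0 * Q 1 1 - Q 0 1 * Q 1 0 = Q 2 2 := by
    simpa [Matrix.adjugate_fin_three] using entry_eq hadj 2 2
  linear_combination (x ^ 2 * (c11 + c22 - r00) + 2 * x ^ 2 * a00)
    + (2 * x * y * (-c01 - r01) + 2 * x * y * (a10 + a01))
    + (2 * x * z * (-c02 - r02) + 2 * x * z * (a20 + a02))
    + (y ^ 2 * (c00 + c22 - r11) + 2 * y ^ 2 * a11)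
    + (2 * y * z * (-c12 - r12) + 2 * y * z * (a21 + a12))
    + (z ^ 2 * (r00 + r11 - c22) + 2 * z ^ 2 * a22)
lemma so3_quad_bound (Q : M3) (hcol : Qᵀ * Q = 1) (x y z : ℝ) :
    (Q 0 0 * x + Q 0 1 * y + Q 0 2 * z) ^ 2 + (Q 1 0 * x + Q 1 1 * y + Q 1 2 * z) ^ 2
      + (Q 2 0 * x + Q 2 1 * y + Q 2 2 * z) ^ 2 = x ^ 2 + y ^ 2 + z ^ 2 := by
  have c00 : Q 0 0 * Q 0 0 + Q 1 0 * Q 1 0 + Q 2 0 * Q 2 0 = 1 := by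
    simpa [Matrix.mul_apply, Fin.sum_univ_three, Matrix.one_apply] using entry_eq hcol 0 0
  have c01 : Q 0 0 * Q 0 1 + Q 1 0 * Q 1 1 + Q 2 0 * Q 2 1 = 0 := by
    simpa [Matrix.mul_apply, Fin.sum_univ_three, Matrix.one_apply] using entry_eq hcol 0 1
  have c02 : Q 0 0 * Q 0 2 + Q 1 0 * Q 1 2 + Q 2 0 * Q 2 2 = 0 := by
    simpa [Matrix.mul_apply, Fin.sum_univ_three, Matrix.one_apply] using entry_eq hcol 0 2
  have c11 : Q 0 1 * Q 0 1 + Q 1 1 * Q 1 1 + Q 2 1 * Q 2 1 = 1 := by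
    simpa [Matrix.mul_apply, Fin.sum_univ_three, Matrix.one_apply] using entry_eq hcol 1 1
  have c12 : Q 0 1 * Q 0 2 + Q 1 1 * Q 1 2 + Q 2 1 * Q 2 2 = 0 := by
    simpa [Matrix.mul_apply, Fin.sum_univ_three, Matrix.one_apply] using entry_eq hcol 1 2
  have c22 : Q 0 2 * Q 0 2 + Q 1 2 * Q 1 2 + Q 2 2 * Q 2 2 = 1 := by
    simpa [Matrix.mul_apply, Fin.sum_univ_three, Matrix.one_apply] using entry_eq hcol 2 2
  linear_combination x ^ 2 * c00 + 2 * x * y * c01 + 2 * x * z * c02 + y ^ 2 * c11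
    + 2 * y * z * c12 + z ^ 2 * c22
lemma master_scalar (T S P A B α c s : ℝ) (hαne : α ≠ 0)
    (pyth : s ^ 2 + c ^ 2 = 1) (e1 : 4 * A ^ 2 = T + 1) (e2 : 4 * A * B * α = -S)
    (e3 : 4 * B ^ 2 * α ^ 2 = 2 * P + (1 - T) * α ^ 2) :
    T + 2 * s * c / α * S + (1 - (2 * c ^ 2 - 1)) / α ^ 2 * (P - α ^ 2 * T)
      = 4 * (A * c - B * s) ^ 2 - 1 := by
  field_simp
  linear_combination (2 * s * c * α) * e2 - (1 - c ^ 2) * e3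
    - 4 * B ^ 2 * α ^ 2 * pyth - c ^ 2 * α ^ 2 * e1

lemma rod_det (x y z α C D : ℝ) (hα2 : α ^ 2 = x ^ 2 + y ^ 2 + z ^ 2)
    (hrel : C ^ 2 = 2 * D - D ^ 2 * α ^ 2) :
    Matrix.det ((1 : M3) + C • (!![0,-z,y; z,0,-x; -y,x,0] : M3)
      + D • ((!![0,-z,y; z,0,-x; -y,x,0] : M3) * !![0,-z,y; z,0,-x; -y,x,0])) = 1 := by
  rw [hα2] at hrel
  rw [Matrix.det_fin_three]
  simp [Matrix.mul_apply, Fin.sum_univ_three]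
  linear_combination (x ^ 2 + y ^ 2 + z ^ 2) * hrel

lemma ple_aux (P a2 : ℝ) (h1 : P ^ 2 ≤ a2 * a2) (h2 : 0 < a2) : P ≤ a2 := by
  nlinarith

lemma ab_aux (A B T P α : ℝ) (hα : 0 < α) (e1 : 4 * A ^ 2 = T + 1)
    (e3 : 4 * B ^ 2 * α ^ 2 = 2 * P + (1 - T) * α ^ 2) (hP : P ≤ α ^ 2) :
    A ^ 2 + B ^ 2 ≤ 1 := by
  nlinarith [mul_pos hα hα, sq_nonneg α]

lemma ub_aux (A B c s : ℝ) (pyth : s ^ 2 + c ^ 2 = 1) (hAB : A ^ 2 + B ^ 2 ≤ 1) :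
    4 * (A * c - B * s) ^ 2 - 1 ≤ 3 := by
  nlinarith [sq_nonneg (A * s + B * c)]
lemma rodrigues (x y z α : ℝ) (hα : 0 < α) (hα2 : α ^ 2 = x ^ 2 + y ^ 2 + z ^ 2) (τ : ℝ) :
    mExp (τ • (!![0,-z,y; z,0,-x; -y,x,0] : M3))
      = (1 : M3) + (Real.sin (τ * α) / α) • (!![0,-z,y; z,0,-x; -y,x,0] : M3)
        + ((1 - Real.cos (τ * α)) / α ^ 2) •
            ((!![0,-z,y; z,0,-x; -y,x,0] : M3) * !![0,-z,y; z,0,-x; -y,x,0]) := by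
  have hαne : α ≠ 0 := ne_of_gt hα
  set K : M3 := !![0,-z,y; z,0,-x; -y,x,0] with hK
  letI : NormedRing M3 := Matrix.linftyOpNormedRing
  letI : NormedAlgebra ℝ M3 := Matrix.linftyOpNormedAlgebra
  have hK3 : K * (K * K) = (-(α ^ 2)) • K := by
    rw [hα2]; ext i j
    fin_cases i <;> fin_cases j <;>
      simp [hK, Matrix.mul_apply, Fin.sum_univ_three] <;> ring
  set g : ℝ → M3 := fun t => (1 : M3) + (Real.sin (t * α) / α) • K
      + ((1 - Real.cos (t * α)) / α ^ 2) • (K * K) with hg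
  have hgd : ∀ t : ℝ, HasDerivAt g
      (Real.cos (t * α) • K + (Real.sin (t * α) / α) • (K * K)) t := by
    intro t
    have hlin : HasDerivAt (fun s : ℝ => s * α) α t := by
      simpa using (hasDerivAt_id t).mul_const α
    have hs : HasDerivAt (fun s : ℝ => Real.sin (s * α) / α) (Real.cos (t * α) * α / α) t :=
      hlin.sin.div_const α
    have hc : HasDerivAt (fun s : ℝ => (1 - Real.cos (s * α)) / α ^ 2)
        (Real.sin (t * α) * α / α ^ 2) t := by
      simpa using (hlin.cos.const_sub 1).div_const (α ^ 2)
    have h12 := ((hs.smul_const K).const_add (1 : M3)).add (hc.smul_const (K * K))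
    have e1 : Real.cos (t * α) * α / α = Real.cos (t * α) := by field_simp
    have e2 : Real.sin (t * α) * α / α ^ 2 = Real.sin (t * α) / α := by
      field_simp
    rw [e1, e2] at h12
    exact h12
  have hgK : ∀ t : ℝ, K * g t
      = Real.cos (t * α) • K + (Real.sin (t * α) / α) • (K * K) := by
    intro t
    have hcoef : (1 - Real.cos (t * α)) / α ^ 2 * (-(α ^ 2)) = Real.cos (t * α) - 1 := by
      field_simp; ring
    calc K * g t
        = K * 1 + (Real.sin (t * α) / α) • (K * K)
          + ((1 - Real.cos (t * α)) / α ^ 2) • (K * (K * K)) := by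
          simp [hg, Matrix.mul_add, Matrix.mul_smul, Matrix.mul_assoc]
      _ = Real.cos (t * α) • K + (Real.sin (t * α) / α) • (K * K) := by
          rw [hK3, smul_smul, hcoef, Matrix.mul_one]
          module
  have hF : ∀ t : ℝ, HasDerivAt (fun u : ℝ => NormedSpace.exp (u • (-K)) * g u) 0 t := by
    intro t
    have h := (hasDerivAt_exp_smul_const (𝕂 := ℝ) (-K) t).mul (hgd t)
    have : NormedSpace.exp (t • (-K)) * -K * g t
        + NormedSpace.exp (t • (-K))
          * (Real.cos (t * α) • K + (Real.sin (t * α) / α) • (K * K)) = 0 := by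
      rw [Matrix.mul_assoc, Matrix.neg_mul, Matrix.mul_neg, hgK t, neg_add_cancel]
    exact h.congr_deriv this
  have hconst : NormedSpace.exp (τ • (-K)) * g τ
      = NormedSpace.exp ((0:ℝ) • (-K)) * g 0 :=
    is_const_of_fderiv_eq_zero (𝕜 := ℝ) (fun s => (hF s).differentiableAt)
      (fun s => by
        refine (hF s).hasFDerivAt.fderiv.trans ?_; ext w : 1; simp; rfl) τ 0
  have h0 : NormedSpace.exp ((0:ℝ) • (-K)) * g 0 = 1 := by
    rw [hg]; simp [NormedSpace.exp_zero]
  have hcomm : Commute (τ • K) (τ • (-K)) := ((Commute.refl K).neg_right.smul_left τ).smul_right τ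
  have hmul : NormedSpace.exp (τ • K) * NormedSpace.exp (τ • (-K)) = 1 := by
    rw [← Matrix.exp_add_of_commute _ _ hcomm]
    rw [smul_neg, add_neg_cancel]
    exact NormedSpace.exp_zero
  have final : mExp (τ • K) = NormedSpace.exp (τ • K) * (NormedSpace.exp (τ • (-K)) * g τ) := by
    rw [hconst, h0, mul_one]; rfl
  rw [final, ← Matrix.mul_assoc, hmul, Matrix.one_mul, hg]

set_option maxHeartbeats 2000000 in
/-- Lemma 1, geodesic convexity of a cell: if `R₁, R₂` lie in the open cell
`S(Rc,θ)` with `θ ∈ (0,π/2)`, and `V` is skew-symmetric with `exp V = R₁ᵀR₂` and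
`‖V^∨‖₂ = d(R₁,R₂)`, then the whole geodesic `τ ↦ R₁·exp(τV)`, `τ ∈ [0,1]`, stays in the cell. -/
theorem geodesic_in_cell (Rc : M3) (hRc : SO3 Rc) (θ : ℝ) (hθ : 0 < θ) (hθ' : θ < π / 2)
    (R₁ R₂ : M3) (hR₁ : R₁ ∈ cell Rc θ) (hR₂ : R₂ ∈ cell Rc θ)
    (V : M3) (hskew : Vᵀ = -V) (hexp : mExp V = R₁ᵀ * R₂)
    (hnorm : norm2 (vee V) = aDist R₁ R₂) :
    ∀ τ ∈ Set.Icc (0 : ℝ) 1, R₁ * mExp (τ • V) ∈ cell Rc θ := by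
  obtain ⟨⟨hR₁o, hR₁d⟩, hR₁dist⟩ := hR₁
  obtain ⟨⟨hR₂o, hR₂d⟩, hR₂dist⟩ := hR₂
  obtain ⟨hRco, hRcd⟩ := hRc
  intro τ hτ
  obtain ⟨hτ0, hτ1⟩ := hτ
  have hπ := Real.pi_pos
  have hθπ : θ ≤ π := by linarith
  have hcosθ : 0 < Real.cos θ := Real.cos_pos_of_mem_Ioo ⟨by linarith, hθ'⟩
  have hsk : ∀ i j, V j i = -V i j := fun i j => by
    have := entry_eq hskew i j
    simpa [Matrix.transpose_apply] using this
  obtain ⟨x, hx⟩ : ∃ a : ℝ, a = V 2 1 := ⟨_, rfl⟩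
  obtain ⟨y, hy⟩ : ∃ a : ℝ, a = V 0 2 := ⟨_, rfl⟩
  obtain ⟨z, hz⟩ : ∃ a : ℝ, a = V 1 0 := ⟨_, rfl⟩
  have h00 : V 0 0 = 0 := by have := hsk 0 0; linarith
  have h11 : V 1 1 = 0 := by have := hsk 1 1; linarith
  have h22 : V 2 2 = 0 := by have := hsk 2 2; linarith
  have h01 : V 0 1 = -z := by have := hsk 1 0; linarith
  have h12 : V 1 2 = -x := by have := hsk 2 1; linarith
  have h20 : V 2 0 = -y := by have := hsk 0 2; linarith
  have hVK : V = !![0,-z,y; z,0,-x; -y,x,0] := by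
    rw [Matrix.eta_fin_three V, h00, h11, h22, h01, h12, h20, ← hx, ← hy, ← hz]
  obtain ⟨α, hαdef⟩ : ∃ a : ℝ, a = norm2 (vee V) := ⟨_, rfl⟩
  have hα2 : α ^ 2 = x ^ 2 + y ^ 2 + z ^ 2 := by
    rw [hαdef, norm2, Real.sq_sqrt (by positivity)]
    rw [Fin.sum_univ_three]
    simp only [vee, Matrix.cons_val_zero, Matrix.cons_val_one, Matrix.head_cons,
      Matrix.cons_val_two, Matrix.tail_cons]
    rw [hx, hy, hz]
  have hα_eq : α = aDist R₁ R₂ := by rw [hαdef, hnorm]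
  have hα0 : 0 ≤ α := by rw [hα_eq]; exact Real.arccos_nonneg _
  have hαπ : α ≤ π := by rw [hα_eq]; exact Real.arccos_le_pi _
  by_cases hαz : α = 0
  · -- degenerate case : V = 0
    have hsum0 : x ^ 2 + y ^ 2 + z ^ 2 = 0 := by rw [← hα2, hαz]; ring
    have hsqx := sq_nonneg x
    have hsqy := sq_nonneg y
    have hsqz := sq_nonneg z
    have hx0 : x = 0 := (pow_eq_zero_iff two_ne_zero).mp (by linarith)
    have hy0 : y = 0 := (pow_eq_zero_iff two_ne_zero).mp (by linarith)
    have hz0 : z = 0 := (pow_eq_zero_iff two_ne_zero).mp (by linarith)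
    have hV0 : V = 0 := by
      have hzero : (0 : M3) = !![(0:ℝ),0,0;0,0,0;0,0,0] := by
        rw [Matrix.eta_fin_three (0 : M3)]
        norm_num
      rw [hVK, hx0, hy0, hz0, hzero]
      norm_num
    have hE1 : mExp (τ • V) = 1 := by
      rw [hV0, smul_zero, mExp]
      exact NormedSpace.exp_zero (𝔸 := M3)
    rw [hE1, Matrix.mul_one]
    exact ⟨⟨hR₁o, hR₁d⟩, hR₁dist⟩
  · have hαpos : 0 < α := lt_of_le_of_ne hα0 (Ne.symm hαz)
    have hαne : α ≠ 0 := ne_of_gt hαpos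
    have hrod := rodrigues x y z α hαpos hα2
    obtain ⟨Q, hQ⟩ : ∃ M : M3, M = Rcᵀ * R₁ := ⟨_, rfl⟩
    have hR₁row : R₁ * R₁ᵀ = 1 := mul_eq_one_comm.mp hR₁o
    have hRcrow : Rc * Rcᵀ = 1 := mul_eq_one_comm.mp hRco
    have hQcol : Qᵀ * Q = 1 := by
      rw [hQ, Matrix.transpose_mul, Matrix.transpose_transpose, Matrix.mul_assoc,
        ← Matrix.mul_assoc Rc Rcᵀ R₁, hRcrow, Matrix.one_mul, hR₁o]
    have hQrow : Q * Qᵀ = 1 := mul_eq_one_comm.mp hQcol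
    have hQdet : Q.det = 1 := by
      rw [hQ, Matrix.det_mul, Matrix.det_transpose, hRcd, hR₁d]; norm_num
    have hQadj : Q.adjugate = Qᵀ := by
      calc Q.adjugate = 1 * Q.adjugate := (Matrix.one_mul _).symm
        _ = Qᵀ * Q * Q.adjugate := by rw [hQcol]
        _ = Qᵀ * (Q * Q.adjugate) := Matrix.mul_assoc _ _ _
        _ = Qᵀ := by rw [Matrix.mul_adjugate, hQdet, one_smul, Matrix.mul_one]
    obtain ⟨T, hTdef⟩ : ∃ a : ℝ, a = Q 0 0 + Q 1 1 + Q 2 2 := ⟨_, rfl⟩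
    obtain ⟨S, hSdef⟩ : ∃ a : ℝ,
      a = x * (Q 1 2 - Q 2 1) + y * (Q 2 0 - Q 0 2) + z * (Q 0 1 - Q 1 0) := ⟨_, rfl⟩
    obtain ⟨P, hPdef⟩ : ∃ a : ℝ,
      a = x * (Q 0 0 * x + Q 0 1 * y + Q 0 2 * z) + y * (Q 1 0 * x + Q 1 1 * y + Q 1 2 * z)
        + z * (Q 2 0 * x + Q 2 1 * y + Q 2 2 * z) := ⟨_, rfl⟩
    have hS2 : S ^ 2 = (T + 1) * (2 * P + (1 - T) * α ^ 2) := by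
      have h := so3_trace_identity Q hQcol hQrow hQadj x y z
      rw [hα2, hSdef, hPdef, hTdef]
      linear_combination h
    have hQtr : Matrix.trace Q = T := by rw [Matrix.trace_fin_three, hTdef]
    -- endpoint trace bound at 0
    have hT1 : Real.arccos ((Matrix.trace Q - 1) / 2) < θ := by rw [hQ]; exact hR₁dist
    have hTgt : 1 + 2 * Real.cos θ < T := by
      have := arccos_lt_elim hθπ hT1
      rw [hQtr] at this; linarith
    -- endpoint trace bound at 1
    have hT2' : Real.arccos ((Matrix.trace (Rcᵀ * R₂) - 1) / 2) < θ := hR₂dist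
    have hT2gt : 1 + 2 * Real.cos θ < Matrix.trace (Rcᵀ * R₂) := by
      have := arccos_lt_elim hθπ hT2'
      linarith
    have hTpos : 0 < T + 1 := by linarith
    obtain ⟨A, hAdef⟩ : ∃ a : ℝ, a = Real.sqrt (T + 1) / 2 := ⟨_, rfl⟩
    have hApos : 0 < A := by
      rw [hAdef]
      have := Real.sqrt_pos.2 hTpos
      linarith
    have hAne : A ≠ 0 := ne_of_gt hApos
    have hA2 : 4 * A ^ 2 = T + 1 := by
      rw [hAdef, div_pow, Real.sq_sqrt hTpos.le]; ring
    obtain ⟨B, hBdef⟩ : ∃ a : ℝ, a = -S / (4 * A * α) := ⟨_, rfl⟩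
    have e2 : 4 * A * B * α = -S := by
      rw [hBdef]; field_simp
    have e3 : 4 * B ^ 2 * α ^ 2 = 2 * P + (1 - T) * α ^ 2 := by
      have h16 : (4 * A * B * α) ^ 2 = S ^ 2 := by rw [e2]; ring
      have hmain : 4 * A ^ 2 * (4 * B ^ 2 * α ^ 2)
          = 4 * A ^ 2 * (2 * P + (1 - T) * α ^ 2) := by
        linear_combination h16 + hS2 - (2 * P + (1 - T) * α ^ 2) * hA2
      exact mul_left_cancel₀ (by positivity) hmain
    -- Cauchy-Schwarz bound  P ≤ α²
    have hw := so3_quad_bound Q hQcol x y z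
    have hPle : P ≤ α ^ 2 := by
      have hL1 : P ^ 2 ≤ α ^ 2 * α ^ 2 := by
        have hiden : α ^ 2 * α ^ 2 - P ^ 2
            = (x * (Q 1 0 * x + Q 1 1 * y + Q 1 2 * z) - y * (Q 0 0 * x + Q 0 1 * y + Q 0 2 * z)) ^ 2
            + (x * (Q 2 0 * x + Q 2 1 * y + Q 2 2 * z) - z * (Q 0 0 * x + Q 0 1 * y + Q 0 2 * z)) ^ 2
            + (y * (Q 2 0 * x + Q 2 1 * y + Q 2 2 * z) - z * (Q 1 0 * x + Q 1 1 * y + Q 1 2 * z)) ^ 2 := by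
          rw [hPdef]
          linear_combination (α ^ 2 + (x ^ 2 + y ^ 2 + z ^ 2)) * hα2 - (x ^ 2 + y ^ 2 + z ^ 2) * hw
        linarith [hiden, sq_nonneg (x * (Q 1 0 * x + Q 1 1 * y + Q 1 2 * z) - y * (Q 0 0 * x + Q 0 1 * y + Q 0 2 * z)), sq_nonneg (x * (Q 2 0 * x + Q 2 1 * y + Q 2 2 * z) - z * (Q 0 0 * x + Q 0 1 * y + Q 0 2 * z)), sq_nonneg (y * (Q 2 0 * x + Q 2 1 * y + Q 2 2 * z) - z * (Q 1 0 * x + Q 1 1 * y + Q 1 2 * z))]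
      exact ple_aux P (α ^ 2) hL1 (by positivity)
    have hAB1 : A ^ 2 + B ^ 2 ≤ 1 := ab_aux A B T P α hαpos hA2 e3 hPle
    -- master trace formula
    have master : ∀ σ : ℝ, Matrix.trace (Q * mExp (σ • V))
        = 4 * (A * Real.cos (σ * α / 2) - B * Real.sin (σ * α / 2)) ^ 2 - 1 := by
      intro σ
      rw [hVK, hrod σ]
      rw [Matrix.mul_add, Matrix.mul_add, Matrix.trace_add, Matrix.trace_add, Matrix.mul_one,
        Matrix.mul_smul, Matrix.mul_smul, Matrix.trace_smul, Matrix.trace_smul]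
      have hTrK : Matrix.trace (Q * !![0,-z,y; z,0,-x; -y,x,0]) = S := by
        rw [Matrix.trace_fin_three]
        simp [Matrix.mul_apply, Fin.sum_univ_three]
        rw [hSdef]; ring
      have hTrK2 : Matrix.trace (Q * (!![0,-z,y; z,0,-x; -y,x,0]
          * !![0,-z,y; z,0,-x; -y,x,0])) = P - α ^ 2 * T := by
        rw [Matrix.trace_fin_three]
        simp [Matrix.mul_apply, Fin.sum_univ_three]
        rw [hPdef, hTdef, hα2]; ring
      rw [hTrK, hTrK2, hQtr, smul_eq_mul, smul_eq_mul]
      have hsin : Real.sin (σ * α) = 2 * Real.sin (σ * α / 2) * Real.cos (σ * α / 2) := by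
        rw [← Real.sin_two_mul]; congr 1; ring
      have hcos : Real.cos (σ * α) = 2 * Real.cos (σ * α / 2) ^ 2 - 1 := by
        rw [← Real.cos_two_mul]; congr 1; ring
      rw [hsin, hcos]
      exact master_scalar T S P A B α _ _ hαne (Real.sin_sq_add_cos_sq _) hA2 e2 e3
    -- endpoint value at τ = 1
    have hend : Matrix.trace (Q * mExp ((1:ℝ) • V)) = Matrix.trace (Rcᵀ * R₂) := by
      rw [one_smul, hexp, hQ, Matrix.mul_assoc, ← Matrix.mul_assoc R₁ R₁ᵀ R₂, hR₁row,
        Matrix.one_mul]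
    obtain ⟨L, hLdef⟩ : ∃ a : ℝ, a = Real.sqrt ((1 + Real.cos θ) / 2) := ⟨_, rfl⟩
    have hL0 : 0 ≤ L := hLdef ▸ Real.sqrt_nonneg _
    have hL2v : L ^ 2 = (1 + Real.cos θ) / 2 := by
      rw [hLdef, Real.sq_sqrt (by linarith)]
    have hL2 : 1 / 2 < L ^ 2 := by rw [hL2v]; linarith
    have h0' : L ^ 2 < A ^ 2 := by rw [hL2v]; linarith [hA2, hTgt]
    have hm1 := master 1
    rw [hend] at hm1
    have h1' : L ^ 2 < (A * Real.cos (1 * α / 2) - B * Real.sin (1 * α / 2)) ^ 2 := by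
      rw [hL2v]; linarith [hm1, hT2gt]
    have hx0' : 0 ≤ τ * α / 2 := div_nonneg (mul_nonneg hτ0 hα0) (by norm_num)
    have hxx' : τ * α / 2 ≤ 1 * α / 2 := by
      have := mul_le_mul_of_nonneg_right hτ1 hα0
      linarith
    have hx1' : 1 * α / 2 ≤ π / 2 := by linarith
    have hkey := sq_core_lemma A B L (τ * α / 2) (1 * α / 2) hAB1 hL2 hL0 hx0' hxx' hx1' h0' h1'
    have hmτ := master τ
    have pyth2 := Real.sin_sq_add_cos_sq (τ * α / 2)
    have hub : Matrix.trace (Q * mExp (τ • V)) ≤ 3 := by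
      rw [hmτ]
      exact ub_aux A B _ _ pyth2 hAB1
    have hlb : 1 + 2 * Real.cos θ < Matrix.trace (Q * mExp (τ • V)) := by
      rw [hmτ]
      have h2 : (1 + Real.cos θ) / 2 < (A * Real.cos (τ * α / 2) - B * Real.sin (τ * α / 2)) ^ 2 := by
        rw [← hL2v]; exact hkey
      linarith
    -- SO(3) membership
    have hEo : (mExp (τ • V))ᵀ * mExp (τ • V) = 1 := by
      have ht : (mExp (τ • V))ᵀ = mExp (-(τ • V)) := by
        show (NormedSpace.exp (τ • V))ᵀ = NormedSpace.exp (-(τ • V))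
        rw [← Matrix.exp_transpose, Matrix.transpose_smul, hskew, smul_neg]
      rw [ht]
      show NormedSpace.exp (-(τ • V)) * NormedSpace.exp (τ • V) = 1
      rw [← Matrix.exp_add_of_commute _ _ ((Commute.refl (τ • V)).neg_left),
        neg_add_cancel]
      exact NormedSpace.exp_zero
    have hprodo : (R₁ * mExp (τ • V))ᵀ * (R₁ * mExp (τ • V)) = 1 := by
      rw [Matrix.transpose_mul, Matrix.mul_assoc, ← Matrix.mul_assoc R₁ᵀ R₁ _, hR₁o,
        Matrix.one_mul, hEo]
    have hrelτ : (Real.sin (τ * α) / α) ^ 2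
        = 2 * ((1 - Real.cos (τ * α)) / α ^ 2)
          - ((1 - Real.cos (τ * α)) / α ^ 2) ^ 2 * α ^ 2 := by
      have p := Real.sin_sq_add_cos_sq (τ * α)
      field_simp
      linear_combination p
    have hdetE : (mExp (τ • V)).det = 1 := by
      rw [hVK, hrod τ]
      exact rod_det x y z α _ _ hα2 hrelτ
    have hdetprod : (R₁ * mExp (τ • V)).det = 1 := by
      rw [Matrix.det_mul, hR₁d, hdetE]; norm_num
    have htr : Matrix.trace (Rcᵀ * (R₁ * mExp (τ • V))) = Matrix.trace (Q * mExp (τ • V)) := by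
      rw [hQ, Matrix.mul_assoc]
    have hdist : aDist Rc (R₁ * mExp (τ • V)) < θ := by
      show Real.arccos ((Matrix.trace (Rcᵀ * (R₁ * mExp (τ • V))) - 1) / 2) < θ
      rw [htr]
      apply arccos_lt_intro hθ.le hθπ
      · linarith [hub]
      · linarith [hlb]
    exact ⟨⟨hprodo, hdetprod⟩, hdist⟩
end
end

section
/- Let θ ∈ (0, π/2) and let R_i, R_j ∈ SO(3) satisfy θ < d(R_i, R_j) < 2θ. Let V be a real skew-symmetric 3×3 matrix such that exp(V) = R_iᵀR_j and ‖V^∨‖₂ = d(R_i, R_j). Then for every τ ∈ [0,1], the geodesic point R_i·exp(τ·V) belongs to S(R_i, θ) ∪ S(R_j, θ). -/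
open Matrix Real Set

noncomputable section

/-! ### Auxiliary lemmas -/

lemma aux_skew_entries (V : M3) (hskew : Vᵀ = -V) :
    V = !![0, -(V 1 0), V 0 2; V 1 0, 0, -(V 2 1); -(V 0 2), V 2 1, 0] := by
  have h : ∀ i j, V j i = -V i j := by
    intro i j
    have := congrFun (congrFun hskew i) j
    simpa [Matrix.transpose_apply] using this
  ext i j
  fin_cases i <;> fin_cases j <;> simp <;>
    first
      | linarith [h 0 0] | linarith [h 1 1] | linarith [h 2 2]
      | linarith [h 1 0] | linarith [h 2 1] | linarith [h 0 2]
      | linarith [h 0 1] | linarith [h 1 2] | linarith [h 2 0]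

lemma aux_cube_explicit (a b c : ℝ) :
    (!![0, -c, b; c, 0, -a; -b, a, 0] : M3) * !![0, -c, b; c, 0, -a; -b, a, 0] *
        !![0, -c, b; c, 0, -a; -b, a, 0]
      = (-(a ^ 2 + b ^ 2 + c ^ 2)) • !![0, -c, b; c, 0, -a; -b, a, 0] := by
  ext i j
  fin_cases i <;> fin_cases j <;>
    simp [Matrix.mul_apply, Fin.sum_univ_three] <;> ring

lemma aux_trace1 (a b c : ℝ) :
    Matrix.trace (!![0, -c, b; c, 0, -a; -b, a, 0] : M3) = 0 := by
  simp [Matrix.trace, Matrix.diag, Fin.sum_univ_three]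

lemma aux_trace2 (a b c : ℝ) :
    Matrix.trace ((!![0, -c, b; c, 0, -a; -b, a, 0] : M3) * !![0, -c, b; c, 0, -a; -b, a, 0])
      = -(2 * (a ^ 2 + b ^ 2 + c ^ 2)) := by
  simp [Matrix.trace, Matrix.diag, Matrix.mul_apply, Fin.sum_univ_three]
  ring

lemma aux_trace_exp_skew (W : M3) (r : ℝ)
    (h3 : W * W * W = (-(r ^ 2)) • W) (h0 : Matrix.trace W = 0)
    (h2 : Matrix.trace (W * W) = -(2 * r ^ 2)) :
    Matrix.trace (NormedSpace.exp W) = 1 + 2 * Real.cos r := by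
  letI : NormedRing M3 := Matrix.linftyOpNormedRing
  letI : NormedAlgebra ℝ M3 := Matrix.linftyOpNormedAlgebra
  have hWW : W * W ^ 2 = (-(r ^ 2)) • W := by rw [pow_two, ← mul_assoc]; exact h3
  have hodd : ∀ k : ℕ, W ^ (2 * k + 1) = ((-(r ^ 2)) ^ k) • W := by
    intro k
    induction k with
    | zero => simp
    | succ k ih =>
      have he : 2 * (k + 1) + 1 = (2 * k + 1) + 2 := by ring
      rw [he, pow_add, ih, smul_mul_assoc, hWW, smul_smul, ← pow_succ]
  have heven : ∀ k : ℕ, W ^ (2 * (k + 1)) = ((-(r ^ 2)) ^ k) • (W * W) := by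
    intro k
    have he : 2 * (k + 1) = (2 * k + 1) + 1 := by ring
    rw [he, pow_succ, hodd, smul_mul_assoc]
  have hsum : Summable fun n : ℕ => ((n.factorial : ℝ))⁻¹ • W ^ n :=
    NormedSpace.expSeries_summable' (𝕂 := ℝ) W
  let T : M3 →L[ℝ] ℝ :=
    ⟨Matrix.traceLinearMap (Fin 3) ℝ ℝ,
      (Matrix.traceLinearMap (Fin 3) ℝ ℝ).continuous_of_finiteDimensional⟩
  have hmap : Matrix.trace (NormedSpace.exp W)
      = ∑' n : ℕ, ((n.factorial : ℝ))⁻¹ * Matrix.trace (W ^ n) := by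
    rw [NormedSpace.exp_eq_tsum (𝕂 := ℝ)]
    have := T.map_tsum hsum
    simpa [T, Matrix.trace_smul, smul_eq_mul] using this
  have hcos := (Real.hasSum_cos r).mul_left 2
  have hone : HasSum (fun k : ℕ => if k = 0 then (1 : ℝ) else 0) 1 := hasSum_ite_eq 0 1
  have key : ∀ k : ℕ, (((2 * k).factorial : ℝ))⁻¹ * Matrix.trace (W ^ (2 * k))
      = 2 * ((-1) ^ k * r ^ (2 * k) / ((2 * k).factorial : ℝ))
          + (if k = 0 then (1 : ℝ) else 0) := by
    intro k
    cases k with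
    | zero => simp [Matrix.trace_one]; norm_num
    | succ k =>
      rw [heven k]
      have hneg : (-(r ^ 2) : ℝ) ^ k = (-1) ^ k * r ^ (2 * k) := by
        rw [neg_pow, pow_mul]
      simp only [Matrix.trace_smul, smul_eq_mul, h2, hneg, Nat.succ_ne_zero, if_false, add_zero]
      have hr2 : r ^ (2 * (k + 1)) = r ^ (2 * k) * r ^ 2 := by ring
      have hpow : ((-1 : ℝ)) ^ (k + 1) = -((-1 : ℝ) ^ k) := by ring
      rw [hr2, hpow, div_eq_mul_inv]
      ring
  have hEven : HasSum (fun k : ℕ => (((2 * k).factorial : ℝ))⁻¹ * Matrix.trace (W ^ (2 * k)))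
      (2 * Real.cos r + 1) := by
    have heq : (fun k : ℕ => (((2 * k).factorial : ℝ))⁻¹ * Matrix.trace (W ^ (2 * k)))
        = fun k : ℕ => 2 * ((-1) ^ k * r ^ (2 * k) / ((2 * k).factorial : ℝ))
            + (if k = 0 then (1 : ℝ) else 0) := funext key
    rw [heq]
    exact hcos.add hone
  have hOdd : HasSum
      (fun k : ℕ => (((2 * k + 1).factorial : ℝ))⁻¹ * Matrix.trace (W ^ (2 * k + 1))) 0 := by
    have heq : (fun k : ℕ => (((2 * k + 1).factorial : ℝ))⁻¹ * Matrix.trace (W ^ (2 * k + 1)))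
        = fun _ : ℕ => (0 : ℝ) := by
      funext k
      rw [hodd k]
      simp [Matrix.trace_smul, h0]
    rw [heq]
    exact hasSum_zero
  have htot := HasSum.even_add_odd
    (f := fun n : ℕ => ((n.factorial : ℝ))⁻¹ * Matrix.trace (W ^ n)) hEven hOdd
  rw [hmap, htot.tsum_eq]
  ring

lemma aux_trace_exp_smul (V : M3) (φ : ℝ)
    (hcube : V * V * V = (-(φ ^ 2)) • V) (h0 : Matrix.trace V = 0)
    (h2 : Matrix.trace (V * V) = -(2 * φ ^ 2)) (s : ℝ) :
    Matrix.trace (NormedSpace.exp (s • V)) = 1 + 2 * Real.cos (s * φ) := by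
  apply aux_trace_exp_skew (s • V) (s * φ)
  · simp only [smul_mul_assoc, mul_smul_comm, smul_smul]
    rw [hcube, smul_smul]
    congr 1
    ring
  · simp [Matrix.trace_smul, h0]
  · rw [smul_mul_assoc, mul_smul_comm, smul_smul, Matrix.trace_smul, h2, smul_eq_mul]
    ring

lemma aux_exp_skew_orth (W : M3) (h : Wᵀ = -W) :
    (NormedSpace.exp W)ᵀ * NormedSpace.exp W = 1 := by
  rw [← Matrix.exp_transpose, h]
  rw [← Matrix.exp_add_of_commute (-W) W ((Commute.refl W).neg_left), neg_add_cancel,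
    NormedSpace.exp_zero]

lemma aux_det_exp_skew_smul (W : M3) (h : Wᵀ = -W) (s : ℝ) :
    (NormedSpace.exp (s • W)).det = 1 := by
  letI : NormedRing M3 := Matrix.linftyOpNormedRing
  letI : NormedAlgebra ℝ M3 := Matrix.linftyOpNormedAlgebra
  have hskew : ∀ t : ℝ, (t • W)ᵀ = -(t • W) := by
    intro t; rw [Matrix.transpose_smul, h, smul_neg]
  have horth : ∀ t : ℝ, ((NormedSpace.exp (t • W)).det) ^ 2 = 1 := by
    intro t
    have := congrArg Matrix.det (aux_exp_skew_orth (t • W) (hskew t))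
    rw [Matrix.det_mul, Matrix.det_transpose, Matrix.det_one] at this
    rw [pow_two]; exact this
  have hcont : Continuous fun t : ℝ => (NormedSpace.exp (t • W)).det :=
    Continuous.matrix_det ((continuous_iff_continuousAt.2 fun x => (NormedSpace.exp_analytic (𝕂 := ℝ) x).continuousAt).comp (continuous_id.smul continuous_const))
  by_contra hne
  have hval : (NormedSpace.exp (s • W)).det = -1 := by
    have h' : ((NormedSpace.exp (s • W)).det - 1) * ((NormedSpace.exp (s • W)).det + 1) = 0 := by
      nlinarith [horth s]
    rcases mul_eq_zero.mp h' with h' | h'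
    · exact absurd (by linarith) hne
    · linarith
  have h0 : (NormedSpace.exp ((0 : ℝ) • W)).det = 1 := by
    rw [zero_smul, NormedSpace.exp_zero, Matrix.det_one]
  have hmem : (0 : ℝ) ∈
      Set.uIcc ((NormedSpace.exp ((0 : ℝ) • W)).det) ((NormedSpace.exp (s • W)).det) := by
    rw [h0, hval]
    simp [Set.mem_uIcc]
  obtain ⟨t, _, ht⟩ := intermediate_value_uIcc (hcont.continuousOn (s := Set.uIcc 0 s)) hmem
  have h2 := horth t
  simp only at ht
  rw [ht] at h2
  norm_num at h2

/-- Lemma 2: for `θ ∈ (0,π/2)` and `R_i, R_j ∈ SO(3)` with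
`θ < d(R_i,R_j) < 2θ`, the geodesic `τ ↦ R_i·exp(τV)` joining them stays in
`S(R_i,θ) ∪ S(R_j,θ)`, where `V` is skew with `exp V = R_iᵀR_j` and `‖V^∨‖₂ = d(R_i,R_j)`. -/
theorem geodesic_in_union_of_cells (θ : ℝ) (hθ : 0 < θ) (hθ' : θ < π / 2)
    (Ri Rj : M3) (hRi : SO3 Ri) (hRj : SO3 Rj)
    (hd₁ : θ < aDist Ri Rj) (hd₂ : aDist Ri Rj < 2 * θ)
    (V : M3) (hskew : Vᵀ = -V) (hexp : mExp V = Riᵀ * Rj)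
    (hnorm : norm2 (vee V) = aDist Ri Rj) :
    ∀ τ ∈ Set.Icc (0 : ℝ) 1, Ri * mExp (τ • V) ∈ cell Ri θ ∪ cell Rj θ := by
  intro τ hτ
  obtain ⟨hτ0, hτ1⟩ := hτ
  set φ := aDist Ri Rj with hφdef
  -- basic bounds on φ
  have hφ0 : 0 ≤ φ := Real.arccos_nonneg _
  have hφπ : φ ≤ π := Real.arccos_le_pi _
  -- the squared norm identity
  set a := V 2 1
  set b := V 0 2
  set c := V 1 0
  have hVrep : V = !![0, -c, b; c, 0, -a; -b, a, 0] := aux_skew_entries V hskew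
  have hsumsq : 0 ≤ a ^ 2 + b ^ 2 + c ^ 2 := by positivity
  have hφ : φ = Real.sqrt (a ^ 2 + b ^ 2 + c ^ 2) := by
    rw [← hnorm, norm2, vee]
    congr 1
    simp [Fin.sum_univ_three]
    try ring
  have hφsq : φ ^ 2 = a ^ 2 + b ^ 2 + c ^ 2 := by
    rw [hφ, Real.sq_sqrt hsumsq]
  -- structural facts about V
  have hcube : V * V * V = (-(φ ^ 2)) • V := by
    rw [hφsq]
    have := aux_cube_explicit a b c
    rw [← hVrep] at this
    exact this
  have htr0 : Matrix.trace V = 0 := by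
    have := aux_trace1 a b c
    rw [← hVrep] at this
    exact this
  have htr2 : Matrix.trace (V * V) = -(2 * φ ^ 2) := by
    rw [hφsq]
    have := aux_trace2 a b c
    rw [← hVrep] at this
    exact this
  -- SO(3) membership of the geodesic point
  have hskew_smul : (τ • V)ᵀ = -(τ • V) := by
    rw [Matrix.transpose_smul, hskew, smul_neg]
  have hEorth : (NormedSpace.exp (τ • V))ᵀ * NormedSpace.exp (τ • V) = 1 :=
    aux_exp_skew_orth (τ • V) hskew_smul
  have hSO3X : SO3 (Ri * mExp (τ • V)) := by
    constructor
    · show (Ri * mExp (τ • V))ᵀ * (Ri * mExp (τ • V)) = 1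
      simp only [mExp]
      rw [Matrix.transpose_mul, mul_assoc, ← mul_assoc Riᵀ Ri, hRi.1, one_mul, hEorth]
    · show (Ri * mExp (τ • V)).det = 1
      simp only [mExp]
      rw [Matrix.det_mul, hRi.2, aux_det_exp_skew_smul V hskew τ, one_mul]
  -- distance to Ri
  have hdRi : aDist Ri (Ri * mExp (τ • V)) = τ * φ := by
    have h1 : Riᵀ * (Ri * mExp (τ • V)) = NormedSpace.exp (τ • V) := by
      simp only [mExp]
      rw [← mul_assoc, hRi.1, one_mul]
    rw [aDist, h1, aux_trace_exp_smul V φ hcube htr0 htr2 τ]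
    have h2 : (1 + 2 * Real.cos (τ * φ) - 1) / 2 = Real.cos (τ * φ) := by ring
    rw [h2]
    exact Real.arccos_cos (mul_nonneg hτ0 hφ0) (by nlinarith)
  -- distance to Rj
  have hdRj : aDist Rj (Ri * mExp (τ • V)) = (1 - τ) * φ := by
    have hRjRi : Rjᵀ * Ri = NormedSpace.exp (-V) := by
      have h1 := congrArg Matrix.transpose hexp
      rw [Matrix.transpose_mul, Matrix.transpose_transpose] at h1
      have h2 : NormedSpace.exp (-V) = (NormedSpace.exp V)ᵀ := by
        rw [← hskew, Matrix.exp_transpose]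
      rw [h2, ← h1]
      rfl
    have h1 : Rjᵀ * (Ri * mExp (τ • V)) = NormedSpace.exp ((τ - 1) • V) := by
      simp only [mExp]
      rw [← mul_assoc, hRjRi,
        ← Matrix.exp_add_of_commute (-V) (τ • V) (((Commute.refl V).smul_right τ).neg_left)]
      congr 1
      rw [sub_smul, one_smul]
      abel
    rw [aDist, h1, aux_trace_exp_smul V φ hcube htr0 htr2 (τ - 1)]
    have h2 : (1 + 2 * Real.cos ((τ - 1) * φ) - 1) / 2 = Real.cos ((τ - 1) * φ) := by ring
    rw [h2]
    have h3 : (τ - 1) * φ = -((1 - τ) * φ) := by ring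
    rw [h3, Real.cos_neg]
    exact Real.arccos_cos (mul_nonneg (by linarith) hφ0) (by nlinarith)
  -- conclude
  rcases le_or_gt τ (1 / 2) with hhalf | hhalf
  · left
    refine ⟨hSO3X, ?_⟩
    rw [hdRi]
    nlinarith
  · right
    refine ⟨hSO3X, ?_⟩
    rw [hdRj]
    nlinarith
end
end

section
/- For every R ∈ SO(3) with tr R ≠ −1, the matrix exponential inverts the logarithm formula: exp(Log R) = R, where Log R := (θ(R)/(2·sin θ(R)))·(R − Rᵀ) for R ≠ I, Log I := 0, and θ(R) := arccos((tr R − 1)/2). Moreover, Log R is skew-symmetric and ‖(Log R)^∨‖₂ = θ(R). -/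
open Matrix Real Set

noncomputable section

set_option maxHeartbeats 1000000

/- ### Auxiliary lemmas -/

lemma adj_cayley (A : M3) :
    A * A - (Matrix.trace A) • A + (Matrix.trace A.adjugate) • (1 : M3) = A.adjugate := by
  rw [Matrix.adjugate_fin_three]
  ext i j
  fin_cases i <;> fin_cases j <;>
    simp [Matrix.mul_apply, Matrix.trace, Matrix.diag, Fin.sum_univ_three, Matrix.one_apply] <;>
    ring

lemma eq_one_of_trace_eq_three (R : M3) (horth : Rᵀ * R = 1)
    (ht : Matrix.trace R = 3) : R = 1 := by
  have hc : ∀ j : Fin 3, (R 0 j)^2 + (R 1 j)^2 + (R 2 j)^2 = 1 := by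
    intro j
    have := congrFun (congrFun horth j) j
    simpa [Matrix.mul_apply, Fin.sum_univ_three, Matrix.one_apply, sq] using this
  have htr : R 0 0 + R 1 1 + R 2 2 = 3 := by
    simpa [Matrix.trace, Matrix.diag, Fin.sum_univ_three] using ht
  have h0 := hc 0; have h1 := hc 1; have h2 := hc 2
  have hd0 : R 0 0 = 1 := by nlinarith [sq_nonneg (R 0 0 - 1), sq_nonneg (R 1 1 - 1), sq_nonneg (R 2 2 - 1), sq_nonneg (R 1 0), sq_nonneg (R 2 0), sq_nonneg (R 0 1), sq_nonneg (R 2 1), sq_nonneg (R 0 2), sq_nonneg (R 1 2)]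
  have hd1 : R 1 1 = 1 := by nlinarith [sq_nonneg (R 0 0 - 1), sq_nonneg (R 1 1 - 1), sq_nonneg (R 2 2 - 1), sq_nonneg (R 1 0), sq_nonneg (R 2 0), sq_nonneg (R 0 1), sq_nonneg (R 2 1), sq_nonneg (R 0 2), sq_nonneg (R 1 2)]
  have hd2 : R 2 2 = 1 := by nlinarith [sq_nonneg (R 0 0 - 1), sq_nonneg (R 1 1 - 1), sq_nonneg (R 2 2 - 1), sq_nonneg (R 1 0), sq_nonneg (R 2 0), sq_nonneg (R 0 1), sq_nonneg (R 2 1), sq_nonneg (R 0 2), sq_nonneg (R 1 2)]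
  ext i j
  fin_cases i <;> fin_cases j <;>
    simp [Matrix.one_apply, hd0, hd1, hd2] <;>
    nlinarith [sq_nonneg (R 1 0), sq_nonneg (R 2 0), sq_nonneg (R 0 1), sq_nonneg (R 2 1), sq_nonneg (R 0 2), sq_nonneg (R 1 2)]

lemma pow_cube (A : M3) (θ : ℝ) (h3 : A * A * A = (-θ^2) • A) :
    ∀ n : ℕ, A^(2*n+1) = ((-θ^2)^n) • A ∧ A^(2*n+2) = ((-θ^2)^n) • (A*A) := by
  intro n
  induction n with
  | zero => simp [pow_succ]
  | succ n ih =>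
    obtain ⟨h1, h2⟩ := ih
    constructor
    · have : 2*(n+1)+1 = (2*n+1) + 2 := by ring
      rw [this, pow_add, h1, show A^2 = A*A from sq A, smul_mul_assoc, ← mul_assoc A A A, h3,
        smul_smul, pow_succ]
      module
    · have : 2*(n+1)+2 = (2*n+2) + 2 := by ring
      rw [this, pow_add, h2, show A^2 = A*A from sq A, smul_mul_assoc]
      have hAA : (A*A) * (A*A) = (-θ^2) • (A*A) := by
        rw [show A*A*(A*A) = (A*A*A)*A by noncomm_ring, h3, smul_mul_assoc]
      rw [hAA, smul_smul, pow_succ]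
      module

lemma exp_of_cube (A : M3) (θ : ℝ) (hθ : θ ≠ 0) (h3 : A * A * A = (-θ^2) • A) :
    NormedSpace.exp A
      = 1 + (Real.sin θ / θ) • A + ((1 - Real.cos θ)/θ^2) • (A*A) := by
  letI : SeminormedRing M3 := Matrix.linftyOpSemiNormedRing
  letI : NormedRing M3 := Matrix.linftyOpNormedRing
  letI : NormedAlgebra ℝ M3 := Matrix.linftyOpNormedAlgebra
  rw [NormedSpace.exp_eq_tsum (𝕂 := ℝ)]
  refine HasSum.tsum_eq ?_
  have hshift : HasSum (fun n : ℕ => (-1:ℝ)^(n+1) * θ^(2*(n+1))/(Nat.factorial (2*(n+1))))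
      (Real.cos θ - 1) := by
    refine (hasSum_nat_add_iff
      (f := fun n : ℕ => (-1:ℝ)^n * θ^(2*n)/(Nat.factorial (2*n))) 1).mpr ?_
    convert Real.hasSum_cos θ using 1
    · rfl
    simp
  have hscalar_even : HasSum
      (fun n : ℕ => -((-1:ℝ)^(n+1) * θ^(2*(n+1))/(Nat.factorial (2*(n+1))))/θ^2)
      ((1 - Real.cos θ)/θ^2) := by
    have := (hshift.neg).div_const (θ^2)
    convert this using 2
    · rfl
    ring
  have heven : HasSum (fun k : ℕ => ((Nat.factorial (2*k)) : ℝ)⁻¹ • A^(2*k))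
      ((1:M3) + ((1 - Real.cos θ)/θ^2) • (A*A)) := by
    have h' : HasSum (fun k : ℕ => ((Nat.factorial (2*(k+1))) : ℝ)⁻¹ • A^(2*(k+1)))
        (((1 - Real.cos θ)/θ^2) • (A*A)) := by
      have h := hscalar_even.smul_const (A*A)
      convert h using 2 with k
      rw [show 2*(k+1) = 2*k+2 by ring, (pow_cube A θ h3 k).2, smul_smul]
      congr 1
      have hf : ((Nat.factorial (2*k+2)) : ℝ) ≠ 0 := by positivity
      field_simp
      ring
    have h0 := h'.zero_add (f := fun k : ℕ => ((Nat.factorial (2*k)) : ℝ)⁻¹ • A^(2*k))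
    simpa using h0
  have hodd : HasSum (fun k : ℕ => ((Nat.factorial (2*k+1)) : ℝ)⁻¹ • A^(2*k+1))
      ((Real.sin θ / θ) • A) := by
    have h := ((Real.hasSum_sin θ).div_const θ).smul_const A
    convert h using 2 with k
    rw [(pow_cube A θ h3 k).1, smul_smul]
    congr 1
    have hf : ((Nat.factorial (2*k+1)) : ℝ) ≠ 0 := by positivity
    field_simp
    ring
  have h := HasSum.even_add_odd (f := fun n : ℕ => ((Nat.factorial n : ℝ))⁻¹ • A^n) heven hodd
  convert h using 1
  · rfl
  abel

/-- for every `R ∈ SO(3)` with `tr R ≠ −1`, `exp(Log R) = R`; moreover `Log R`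
is skew-symmetric and `‖(Log R)^∨‖₂ = θ(R) = arccos((tr R − 1)/2)`. -/
theorem exp_mLog_eq (R : M3) (hR : SO3 R) (htr : Matrix.trace R ≠ -1) :
    mExp (mLog R) = R ∧
    (mLog R)ᵀ = -(mLog R) ∧
    norm2 (vee (mLog R)) = Real.arccos ((Matrix.trace R - 1) / 2) := by
  obtain ⟨horth, hdet⟩ := hR
  by_cases h1 : R = 1
  · subst h1
    have htr1 : Matrix.trace (1 : M3) = 3 := by
      simp [Matrix.trace, Matrix.diag, Fin.sum_univ_three]
    refine ⟨?_, ?_, ?_⟩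
    · rw [mLog, if_pos rfl, mExp, NormedSpace.exp_zero]
    · rw [mLog, if_pos rfl]; simp
    · rw [mLog, if_pos rfl, htr1]
      norm_num [norm2, vee, Fin.sum_univ_three, Real.arccos_one]
      simp
  · -- main case
    have hRRT : R * Rᵀ = 1 := mul_eq_one_comm.mp horth
    have hadjmul : R * R.adjugate = 1 := by
      rw [Matrix.mul_adjugate, hdet, one_smul]
    have hadj : R.adjugate = Rᵀ := by
      calc R.adjugate = (Rᵀ * R) * R.adjugate := by rw [horth, one_mul]
        _ = Rᵀ * (R * R.adjugate) := by rw [Matrix.mul_assoc]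
        _ = Rᵀ := by rw [hadjmul, mul_one]
    set t := Matrix.trace R with ht
    have hE : R * R = t • R - t • (1:M3) + Rᵀ := by
      have h := adj_cayley R
      rw [hadj, Matrix.trace_transpose, ← ht] at h
      rw [← h]; abel
    have hET : Rᵀ * Rᵀ = t • Rᵀ - t • (1:M3) + R := by
      have h := congrArg Matrix.transpose hE
      simpa [Matrix.transpose_mul, Matrix.transpose_smul, Matrix.transpose_sub,
        Matrix.transpose_add, Matrix.transpose_one] using h
    have hBB : (R - Rᵀ) * (R - Rᵀ) = (t+1) • (R + Rᵀ) - (2*(t+1)) • (1:M3) := by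
      have expand : (R - Rᵀ) * (R - Rᵀ) = R*R - R*Rᵀ - Rᵀ*R + Rᵀ*Rᵀ := by noncomm_ring
      rw [expand, hE, hET, hRRT, horth]
      module
    have hkey : (R + Rᵀ) * (R - Rᵀ) = (t-1) • (R - Rᵀ) := by
      have expand : (R + Rᵀ) * (R - Rᵀ) = R*R - R*Rᵀ + Rᵀ*R - Rᵀ*Rᵀ := by noncomm_ring
      rw [expand, hE, hET, hRRT, horth]
      module
    have hBBB : (R - Rᵀ) * (R - Rᵀ) * (R - Rᵀ) = (-((t+1)*(3-t))) • (R - Rᵀ) := by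
      rw [hBB, Matrix.sub_mul, smul_mul_assoc, smul_mul_assoc, one_mul, hkey,
        smul_smul, ← sub_smul]
      congr 1
      ring
    -- trace of hBB gives the sum of squares identity
    have htrBB := congrArg Matrix.trace hBB
    simp only [Matrix.trace, Matrix.diag, Fin.sum_univ_three, Matrix.mul_apply,
      Matrix.sub_apply, Matrix.transpose_apply, Matrix.add_apply, Matrix.smul_apply,
      Matrix.one_apply, smul_eq_mul, ht] at htrBB
    have hsum : (R 2 1 - R 1 2)^2 + (R 0 2 - R 2 0)^2 + (R 1 0 - R 0 1)^2
        = (t+1)*(3-t) := by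
      have htt : t = R 0 0 + R 1 1 + R 2 2 := by
        rw [ht]; simp [Matrix.trace, Matrix.diag, Fin.sum_univ_three]
      rw [htt]
      norm_num at htrBB
      linear_combination (-(1:ℝ)/2) * htrBB
    have hpos : 0 ≤ (t+1)*(3-t) := by
      rw [← hsum]; positivity
    have ht3 : t ≠ 3 := fun h => h1 (eq_one_of_trace_eq_three R horth h)
    have ht1 : t + 1 ≠ 0 := fun h => htr (by linarith)
    have ht_ub : t < 3 := lt_of_le_of_ne (by nlinarith) ht3
    have ht_lb : -1 < t := lt_of_le_of_ne (by nlinarith) (fun h => ht1 (by linarith))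
    set x : ℝ := (t - 1)/2 with hx
    have hx1 : -1 < x := by rw [hx]; linarith
    have hx2 : x < 1 := by rw [hx]; linarith
    set θ := Real.arccos x with hθdef
    have hcos : Real.cos θ = x := Real.cos_arccos (le_of_lt hx1) (le_of_lt hx2)
    have hθpos : 0 < θ := Real.arccos_pos.2 hx2
    have hθlt : θ < π := by
      refine lt_of_le_of_ne (Real.arccos_le_pi x) (fun h => ?_)
      rw [hθdef] at h
      rw [hθdef, h, Real.cos_pi] at hcos
      linarith
    have hsinpos : 0 < Real.sin θ := Real.sin_pos_of_pos_of_lt_pi hθpos hθlt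
    have hsne : Real.sin θ ≠ 0 := ne_of_gt hsinpos
    have hθne : θ ≠ 0 := ne_of_gt hθpos
    have h3t : (3 : ℝ) - t ≠ 0 := fun h => ht3 (by linarith)
    have hs2 : Real.sin θ * Real.sin θ = (t+1)*(3-t)/4 := by
      have h := Real.sin_sq_add_cos_sq θ
      rw [hcos, hx] at h
      linear_combination h
    have h4 : (t+1)*(3-t) = 4*(Real.sin θ * Real.sin θ) := by linarith
    set c : ℝ := θ / (2 * Real.sin θ) with hc
    have hLog : mLog R = c • (R - Rᵀ) := by
      rw [mLog, if_neg h1]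
    have hA3 : (c • (R - Rᵀ)) * (c • (R - Rᵀ)) * (c • (R - Rᵀ))
        = (-θ^2) • (c • (R - Rᵀ)) := by
      rw [smul_mul_smul_comm, smul_mul_smul_comm, hBBB, smul_smul, smul_smul]
      congr 1
      rw [hc, h4]
      field_simp
      ring
    refine ⟨?_, ?_, ?_⟩
    · -- exp part
      have hc1 : (Real.sin θ / θ) * c = 1/2 := by
        rw [hc]; field_simp
      have hc2 : ((1 - Real.cos θ)/θ^2) * (c*c) = 1/(2*(t+1)) := by
        rw [hcos, hx, hc]
        calc ((1 - (t-1)/2)/θ^2) * ((θ/(2*Real.sin θ))*(θ/(2*Real.sin θ)))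
            = (3-t)/(8*(Real.sin θ * Real.sin θ)) := by field_simp; ring
          _ = (3-t)/(2*((t+1)*(3-t))) := by rw [h4]; congr 1; ring
          _ = 1/(2*(t+1)) := by field_simp
      rw [hLog, mExp, exp_of_cube _ θ hθne hA3]
      have hAA : (c • (R - Rᵀ)) * (c • (R - Rᵀ)) = (c*c) • ((R - Rᵀ) * (R - Rᵀ)) := by
        rw [smul_mul_smul_comm]
      rw [hAA, smul_smul, smul_smul, hc1, hc2, hBB]
      match_scalars
      all_goals (field_simp; try ring)
    · -- skew-symmetry
      rw [hLog, Matrix.transpose_smul, Matrix.transpose_sub, Matrix.transpose_transpose]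
      module
    · -- norm part
      rw [hLog, norm2, vee]
      simp only [Matrix.smul_apply, Matrix.sub_apply, Matrix.transpose_apply, smul_eq_mul,
        Fin.sum_univ_three, Matrix.cons_val_zero, Matrix.cons_val_one, Matrix.head_cons,
        Matrix.cons_val_two, Matrix.tail_cons]
      have hval : (c * (R 2 1 - R 1 2))^2 + (c * (R 0 2 - R 2 0))^2
          + (c * (R 1 0 - R 0 1))^2 = θ^2 := by
        have hstep : (c * (R 2 1 - R 1 2))^2 + (c * (R 0 2 - R 2 0))^2
            + (c * (R 1 0 - R 0 1))^2 = c^2 * ((t+1)*(3-t)) := by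
          rw [← hsum]; ring
        rw [hstep, hc, h4]
        field_simp
        ring
      rw [hval]
      exact Real.sqrt_sq (le_of_lt hθpos)
end
end

section
/- Let θ ∈ (0, π/2), ε := 4·sin²(θ/2), and let N be a finite index set with centers R_i ∈ SO(3), i ∈ N. Suppose R ∈ SO(3) and j ∈ N are such that r_j(R) > 0 while r_k(R) ≤ 0 for all k ∈ N with k ≠ j, and suppose Σ_{i∈N} s′(r_i(R)/ε)·e^i(R) = 0. Then R = R_j. -/
open Matrix Real Set

noncomputable section

/-- `ρ(x) = (1/x)·e^{−1/x}` (with the junk value `ρ(0) = 0`, as required). -/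
noncomputable def rhoFun (x : ℝ) : ℝ := (1 / x) * Real.exp (-1 / x)

/-- The smoothing function `s`: `0` for `x < 0`, `ρ(x)/(ρ(x)+ρ(1−x))` on `[0,1)`, `1` for
`x ≥ 1`. -/
noncomputable def sFun (x : ℝ) : ℝ :=
  if x < 0 then 0 else if x < 1 then rhoFun x / (rhoFun x + rhoFun (1 - x)) else 1

/-- Barrier component `r_i(R) := ε − ‖R_i − R‖_F²/2`. -/
noncomputable def rBar (ε : ℝ) (Ri R : M3) : ℝ := ε - frob (Ri - R) ^ 2 / 2

/-- `e^i(R) := ((RᵀR_i) − (RᵀR_i)ᵀ)^∨ ∈ ℝ³`. -/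
noncomputable def eVec (Ri R : M3) : Fin 3 → ℝ := vee ((Rᵀ * Ri) - (Rᵀ * Ri)ᵀ)

/-! ### Auxiliary lemmas -/

lemma aux_proj_eq_zero (M : M3) (hsym : Mᵀ = M) (hidem : M * M = M) (htr : M.trace < 1) :
    M = 0 := by
  by_contra hM
  have : ∃ a b, M a b ≠ 0 := by
    by_contra h
    push_neg at h
    exact hM (by ext a b; simp [h])
  obtain ⟨a, b, hab⟩ := this
  set u : Fin 3 → ℝ := fun i => M i b with hu
  have hMu : ∀ i, ∑ k, M i k * u k = u i := by
    intro i
    have := congrFun (congrFun hidem i) b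
    simpa [Matrix.mul_apply, hu] using this
  have hS : M.trace = ∑ i, ∑ k, (M i k)^2 := by
    have h2 : M.trace = (M * M).trace := by rw [hidem]
    rw [h2]
    simp only [Matrix.trace, Matrix.diag, Matrix.mul_apply]
    rw [Finset.sum_comm]
    congr 1; ext i; congr 1; ext k
    have : M k i = M i k := by conv_lhs => rw [← hsym, Matrix.transpose_apply]
    rw [this]; ring
  have hu2pos : 0 < ∑ i, (u i)^2 := by
    have : (u a)^2 > 0 := by positivity
    have hle : (u a)^2 ≤ ∑ i, (u i)^2 :=
      Finset.single_le_sum (fun i _ => sq_nonneg (u i)) (Finset.mem_univ a)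
    linarith
  have key : ∑ i, (u i)^2 ≤ (∑ i, ∑ k, (M i k)^2) * ∑ k, (u k)^2 := by
    calc ∑ i, (u i)^2 = ∑ i, (∑ k, M i k * u k)^2 := by
          congr 1; ext i; rw [hMu i]
      _ ≤ ∑ i, (∑ k, (M i k)^2) * ∑ k, (u k)^2 := by
          apply Finset.sum_le_sum
          intro i _
          exact Finset.sum_mul_sq_le_sq_mul_sq _ _ _
      _ = (∑ i, ∑ k, (M i k)^2) * ∑ k, (u k)^2 := by rw [Finset.sum_mul]
  have h1 : (1:ℝ) ≤ ∑ i, ∑ k, (M i k)^2 := by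
    nlinarith [key, hu2pos]
  rw [hS] at htr; linarith

lemma aux_trace_transpose_mul_self (A : M3) :
    Matrix.trace (Aᵀ * A) = ∑ i, ∑ k, (A k i)^2 := by
  simp only [Matrix.trace, Matrix.diag, Matrix.mul_apply, Matrix.transpose_apply]
  congr 1; ext i; congr 1; ext k; ring

lemma aux_trace_tms_nonneg (A : M3) : 0 ≤ Matrix.trace (Aᵀ * A) := by
  rw [aux_trace_transpose_mul_self]; positivity

lemma aux_frob_sq (A : M3) : frob A ^ 2 = Matrix.trace (Aᵀ * A) :=
  Real.sq_sqrt (aux_trace_tms_nonneg A)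

lemma aux_frob_sq_eq_zero {A : M3} (h : frob A ^ 2 = 0) : A = 0 := by
  rw [aux_frob_sq, aux_trace_transpose_mul_self] at h
  ext i k
  have h1 : ∀ a ∈ Finset.univ, (0:ℝ) ≤ ∑ b, (A b a)^2 := fun a _ => by positivity
  have := (Finset.sum_eq_zero_iff_of_nonneg h1).mp h k (Finset.mem_univ k)
  have h2 : ∀ b ∈ Finset.univ, (0:ℝ) ≤ (A b k)^2 := fun b _ => by positivity
  have := (Finset.sum_eq_zero_iff_of_nonneg h2).mp this i (Finset.mem_univ i)
  simpa using pow_eq_zero_iff (n := 2) (by norm_num) |>.mp this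

lemma aux_frob_expand (Rc R : M3) (hRc : Rcᵀ * Rc = 1) (hR : Rᵀ * R = 1) :
    Matrix.trace ((Rc - R)ᵀ * (Rc - R)) = 6 - 2 * Matrix.trace (Rᵀ * Rc) := by
  have h1 : (Rc - R)ᵀ * (Rc - R) = Rcᵀ * Rc - Rcᵀ * R - Rᵀ * Rc + Rᵀ * R := by
    rw [Matrix.transpose_sub]; noncomm_ring
  rw [h1, hRc, hR]
  have h2 : Matrix.trace (Rcᵀ * R) = Matrix.trace (Rᵀ * Rc) := by
    rw [← Matrix.trace_transpose (Rcᵀ * R), Matrix.transpose_mul, Matrix.transpose_transpose]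
  have h3 : Matrix.trace (1 : M3) = 3 := by simp
  simp only [Matrix.trace_add, Matrix.trace_sub, h2, h3]
  ring

lemma aux_rho_hasDerivAt {x : ℝ} (hx : 0 < x) :
    HasDerivAt rhoFun (Real.exp (-1 / x) * ((x^2)⁻¹ * x⁻¹ - (x^2)⁻¹)) x := by
  have hx0 : x ≠ 0 := hx.ne'
  have h1 : HasDerivAt (fun y : ℝ => y⁻¹) (-(x^2)⁻¹) x := hasDerivAt_inv hx0
  have h2 : HasDerivAt (fun y : ℝ => -y⁻¹) ((x^2)⁻¹) x := by have := h1.neg; rw [neg_neg] at this; exact this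
  have h3 : HasDerivAt (fun y : ℝ => Real.exp (-y⁻¹)) (Real.exp (-x⁻¹) * (x^2)⁻¹) x :=
    (Real.hasDerivAt_exp _).comp x h2
  have h4 : HasDerivAt (fun y : ℝ => y⁻¹ * Real.exp (-y⁻¹))
      (-(x^2)⁻¹ * Real.exp (-x⁻¹) + x⁻¹ * (Real.exp (-x⁻¹) * (x^2)⁻¹)) x := h1.mul h3
  have : rhoFun = fun y : ℝ => y⁻¹ * Real.exp (-y⁻¹) := by
    funext y; simp [rhoFun, one_div, neg_div]
  rw [this]
  convert h4 using 1
  have : -1 / x = -x⁻¹ := by field_simp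
  rw [this]; ring

lemma aux_rho_pos {x : ℝ} (hx : 0 < x) : 0 < rhoFun x := by
  unfold rhoFun; positivity

lemma aux_rho_deriv_pos {x : ℝ} (hx : 0 < x) (hx1 : x < 1) :
    0 < Real.exp (-1 / x) * ((x^2)⁻¹ * x⁻¹ - (x^2)⁻¹) := by
  have h1 : (1:ℝ) < x⁻¹ := one_lt_inv₀ hx |>.mpr hx1
  have h2 : (0:ℝ) < (x^2)⁻¹ := by positivity
  have : (x^2)⁻¹ < (x^2)⁻¹ * x⁻¹ := by nlinarith
  have := Real.exp_pos (-1/x)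
  nlinarith

lemma aux_sFun_deriv_pos {x : ℝ} (hx : 0 < x) (hx1 : x < 1) : 0 < deriv sFun x := by
  set ρ := rhoFun x
  set ρ' := Real.exp (-1 / x) * ((x^2)⁻¹ * x⁻¹ - (x^2)⁻¹)
  set σ := rhoFun (1 - x)
  set σ' := Real.exp (-1 / (1-x)) * (((1-x)^2)⁻¹ * (1-x)⁻¹ - ((1-x)^2)⁻¹)
  have hρ : 0 < ρ := aux_rho_pos hx
  have hσ : 0 < σ := aux_rho_pos (by linarith)
  have hρ' : 0 < ρ' := aux_rho_deriv_pos hx hx1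
  have hσ' : 0 < σ' := aux_rho_deriv_pos (by linarith) (by linarith)
  have hrx : HasDerivAt rhoFun ρ' x := aux_rho_hasDerivAt hx
  have hone : HasDerivAt (fun y : ℝ => 1 - y) (-1) x := by
    simpa using (hasDerivAt_id x).const_sub 1
  have hrsx : HasDerivAt (fun y => rhoFun (1 - y)) (-σ') x := by
    have := (aux_rho_hasDerivAt (x := 1 - x) (by linarith)).comp x hone
    rw [mul_neg_one] at this
    exact this
  have hden : HasDerivAt (fun y => rhoFun y + rhoFun (1 - y)) (ρ' - σ') x := by
    have := hrx.add hrsx; rw [← sub_eq_add_neg] at this; exact this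
  have hdenne : ρ + σ ≠ 0 := by positivity
  have hf : HasDerivAt (fun y => rhoFun y / (rhoFun y + rhoFun (1 - y)))
      ((ρ' * (ρ + σ) - ρ * (ρ' - σ')) / (ρ + σ)^2) x := hrx.div hden hdenne
  have heq : sFun =ᶠ[nhds x] fun y => rhoFun y / (rhoFun y + rhoFun (1 - y)) := by
    have hmem : Ioo (0:ℝ) 1 ∈ nhds x := Ioo_mem_nhds hx hx1
    filter_upwards [hmem] with y hy
    simp only [sFun, if_neg (not_lt.mpr hy.1.le), if_pos hy.2]
  rw [heq.deriv_eq, hf.deriv]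
  have : ρ' * (ρ + σ) - ρ * (ρ' - σ') = ρ' * σ + ρ * σ' := by ring
  rw [this]
  positivity

lemma aux_sFun_deriv_zero {x : ℝ} (hx : x ≤ 0) : deriv sFun x = 0 := by
  rcases lt_or_eq_of_le hx with h | h
  · have heq : sFun =ᶠ[nhds x] fun _ => (0:ℝ) := by
      filter_upwards [Iio_mem_nhds h] with y hy
      simp [sFun, show y < 0 from hy]
    rw [heq.deriv_eq, deriv_const]
  · subst h
    by_cases hd : DifferentiableAt ℝ sFun 0
    · have hzero : ∀ y ∈ Iic (0:ℝ), sFun y = 0 := by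
        intro y hy
        rcases lt_or_eq_of_le (mem_Iic.mp hy) with h' | h'
        · simp [sFun, h']
        · subst h'; simp [sFun, rhoFun]
      have h1 : HasDerivWithinAt sFun (deriv sFun 0) (Iic 0) 0 :=
        hd.hasDerivAt.hasDerivWithinAt
      have h2 : HasDerivWithinAt sFun 0 (Iic 0) 0 :=
        (hasDerivWithinAt_const 0 (Iic 0) (0:ℝ)).congr hzero (hzero 0 (by simp))
      exact ((uniqueDiffOn_Iic 0) 0 (by simp)).eq_deriv _ h1 h2
    · exact deriv_zero_of_not_differentiableAt hd

/-- Proposition 3, case 1: if `R` lies in exactly the cell `S_j` (that is,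
`r_j(R) > 0` and `r_k(R) ≤ 0` for all other `k ∈ N`) and the weighted sum
`Σ_{i∈N} s′(r_i(R)/ε)·e^i(R)` vanishes, then `R = R_j`. -/
theorem singular_point_one_cell {ι : Type*} (N : Finset ι) (Rc : ι → M3)
    (θ ε : ℝ) (hθ : 0 < θ) (hθ' : θ < π / 2) (hε : ε = 4 * Real.sin (θ / 2) ^ 2)
    (hSO : ∀ i ∈ N, SO3 (Rc i)) (R : M3) (hR : SO3 R)
    (j : ι) (hj : j ∈ N)
    (hrj : 0 < rBar ε (Rc j) R)
    (hrk : ∀ k ∈ N, k ≠ j → rBar ε (Rc k) R ≤ 0)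
    (hsum : ∑ i ∈ N, deriv sFun (rBar ε (Rc i) R / ε) • eVec (Rc i) R = 0) :
    R = Rc j := by
  have hπ : 0 < π := Real.pi_pos
  have hsin : 0 < Real.sin (θ / 2) :=
    Real.sin_pos_of_pos_of_lt_pi (by linarith) (by linarith)
  have hεpos : 0 < ε := by rw [hε]; positivity
  have hεlt : ε < 2 := by
    have hmono : Real.sin (θ / 2) < Real.sin (π / 4) := by
      apply Real.strictMonoOn_sin ⟨by linarith, by linarith⟩ ⟨by linarith, by linarith⟩
      linarith
    rw [Real.sin_pi_div_four] at hmono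
    have h2 : Real.sqrt 2 ^ 2 = 2 := Real.sq_sqrt (by norm_num)
    rw [hε]
    nlinarith [hmono, hsin]
  set Q := Rᵀ * Rc j with hQ
  have hfe : frob (Rc j - R) ^ 2 = 6 - 2 * Q.trace := by
    rw [aux_frob_sq, aux_frob_expand _ _ (hSO j hj).1 hR.1]
  by_cases ht : frob (Rc j - R) ^ 2 = 0
  · have h0 : Rc j - R = 0 := aux_frob_sq_eq_zero ht
    have := sub_eq_zero.mp h0
    exact this.symm
  · have htpos : 0 < frob (Rc j - R) ^ 2 := lt_of_le_of_ne (by positivity) (Ne.symm ht)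
    have hlt : rBar ε (Rc j) R < ε := by unfold rBar; linarith
    have hr0 : 0 < rBar ε (Rc j) R / ε := div_pos hrj hεpos
    have hr1 : rBar ε (Rc j) R / ε < 1 := (div_lt_one hεpos).mpr hlt
    have hc : 0 < deriv sFun (rBar ε (Rc j) R / ε) := aux_sFun_deriv_pos hr0 hr1
    have hcol : ∑ i ∈ N, deriv sFun (rBar ε (Rc i) R / ε) • eVec (Rc i) R
        = deriv sFun (rBar ε (Rc j) R / ε) • eVec (Rc j) R := by
      apply Finset.sum_eq_single
      · intro k hk hkj
        rw [aux_sFun_deriv_zero (div_nonpos_of_nonpos_of_nonneg (hrk k hk hkj) hεpos.le)]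
        simp
      · intro h; exact absurd hj h
    rw [hcol] at hsum
    have hev : eVec (Rc j) R = 0 := by
      rcases smul_eq_zero.mp hsum with h | h
      · exact absurd h hc.ne'
      · exact h
    have h0 : ∀ i, eVec (Rc j) R i = 0 := fun i => congrFun hev i
    have e0 := h0 0
    have e1 := h0 1
    have e2 := h0 2
    simp only [eVec, vee, ← hQ, Matrix.cons_val_zero, Matrix.cons_val_one, Matrix.head_cons,
      Matrix.cons_val_two, Matrix.tail_cons, Matrix.sub_apply, Matrix.transpose_apply,
      sub_eq_zero] at e0 e1 e2
    have hQsym : Qᵀ = Q := by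
      ext a b
      fin_cases a <;> fin_cases b <;>
        simp only [Matrix.transpose_apply] <;>
        first
          | rfl
          | (exact e0) | (exact e0.symm)
          | (exact e1) | (exact e1.symm)
          | (exact e2) | (exact e2.symm)
    have hRRT : R * Rᵀ = 1 := mul_eq_one_comm.mp hR.1
    have hQQ : Qᵀ * Q = 1 := by
      rw [hQ, Matrix.transpose_mul, Matrix.transpose_transpose]
      calc (Rc j)ᵀ * R * (Rᵀ * Rc j) = (Rc j)ᵀ * (R * Rᵀ) * Rc j := by noncomm_ring
        _ = 1 := by rw [hRRT, Matrix.mul_one, (hSO j hj).1]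
    have hQ2 : Q * Q = 1 := by nth_rewrite 1 [← hQsym]; exact hQQ
    have htrQ : 1 < Q.trace := by
      have : rBar ε (Rc j) R = ε - (6 - 2 * Q.trace) / 2 := by rw [rBar, hfe]
      rw [this] at hrj
      linarith
    set M : M3 := (1/2 : ℝ) • (1 - Q) with hM
    have hMsym : Mᵀ = M := by
      rw [hM, Matrix.transpose_smul, Matrix.transpose_sub, Matrix.transpose_one, hQsym]
    have hX : (1 - Q) * (1 - Q) = 1 - Q - Q + Q * Q := by noncomm_ring
    rw [hQ2] at hX
    have hMidem : M * M = M := by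
      rw [hM, Matrix.smul_mul, Matrix.mul_smul, smul_smul, hX]
      ext a b
      simp only [Matrix.smul_apply, Matrix.sub_apply, Matrix.add_apply, Matrix.one_apply,
        smul_eq_mul]
      by_cases hab : a = b <;> simp [hab] <;> ring
    have hMtr : M.trace < 1 := by
      rw [hM, Matrix.trace_smul, Matrix.trace_sub, Matrix.trace_one]
      simp only [smul_eq_mul]
      norm_num
      linarith
    have hM0 : M = 0 := aux_proj_eq_zero M hMsym hMidem hMtr
    have hQ1 : Q = 1 := by
      rw [hM] at hM0
      rcases smul_eq_zero.mp hM0 with h | h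
      · norm_num at h
      · have := sub_eq_zero.mp h
        exact this.symm
    have : R * Q = R * 1 := by rw [hQ1]
    rw [hQ, ← Matrix.mul_assoc, hRRT, Matrix.one_mul, Matrix.mul_one] at this
    exact this.symm
end
end

section
/- Let R, R_j, R_k ∈ SO(3) and v_j, v_k ∈ ℝ³ with 0 < ‖v_j‖₂ < π, 0 < ‖v_k‖₂ < π, exp([v_j]×) = RᵀR_j and exp([v_k]×) = RᵀR_k. If μ_j·e^j(R) + μ_k·e^k(R) = 0 for some real μ_j > 0 and μ_k > 0, then v_j and v_k are parallel, i.e., there exists λ ∈ ℝ with v_k = λ·v_j. -/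
open Matrix Real Set

noncomputable section

/-- The hat map `[v]×`, so that `[v]× w = v × w`. -/
def hat (v : Fin 3 → ℝ) : M3 :=
  !![0, -v 2, v 1; v 2, 0, -v 0; -v 1, v 0, 0]

set_option maxHeartbeats 1000000

lemma hat_transpose (v : Fin 3 → ℝ) : (hat v)ᵀ = -hat v := by
  ext i j; fin_cases i <;> fin_cases j <;> simp [hat]

lemma hat_cube (v : Fin 3 → ℝ) :
    hat v ^ 3 = (-(v 0 ^ 2 + v 1 ^ 2 + v 2 ^ 2)) • hat v := by
  ext i j
  fin_cases i <;> fin_cases j <;>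
    simp [hat, pow_succ, Matrix.mul_apply, Fin.sum_univ_three] <;> ring

lemma norm2_sq (v : Fin 3 → ℝ) : norm2 v ^ 2 = v 0 ^ 2 + v 1 ^ 2 + v 2 ^ 2 := by
  rw [norm2, Real.sq_sqrt (by positivity), Fin.sum_univ_three]

lemma hat_cube' (v : Fin 3 → ℝ) : hat v ^ 3 = (-(norm2 v ^ 2)) • hat v := by
  rw [norm2_sq]; exact hat_cube v

lemma vee_smul_hat (c : ℝ) (v : Fin 3 → ℝ) : vee (c • hat v) = c • v := by
  funext i; fin_cases i <;> simp [vee, hat]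

open Nat in
lemma odd_pow_of_cube (A : M3) (θ : ℝ) (hcube : A ^ 3 = (-(θ ^ 2)) • A) :
    ∀ k : ℕ, A ^ (2 * k + 1) = ((-(θ ^ 2)) ^ k) • A := by
  intro k
  induction k with
  | zero => simp
  | succ k ih =>
    have h21 : 2 * (k + 1) + 1 = (2 * k + 1) + 2 := by ring
    have hmul : A * A ^ 2 = A ^ 3 := (pow_succ' A 2).symm
    rw [h21, pow_add, ih, Matrix.smul_mul, hmul, hcube, smul_smul, ← pow_succ]

open Nat in
lemma oddterm_eq (A : M3) (θ : ℝ) (hθ : 0 < θ) (hcube : A ^ 3 = (-(θ ^ 2)) • A) (k : ℕ) :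
    ((2 * k + 1)! : ℝ)⁻¹ • A ^ (2 * k + 1) - ((2 * k + 1)! : ℝ)⁻¹ • (-A) ^ (2 * k + 1)
      = (2 / θ * ((-1) ^ k * θ ^ (2 * k + 1) / (2 * k + 1)!)) • A := by
  rw [Odd.neg_pow ⟨k, by ring⟩, smul_neg, sub_neg_eq_add, ← two_smul ℝ,
    odd_pow_of_cube A θ hcube, smul_smul, smul_smul]
  congr 1
  have hfac : ((2 * k + 1)! : ℝ) ≠ 0 := by positivity
  have hθ' : θ ≠ 0 := ne_of_gt hθ
  have hnp : (-(θ ^ 2)) ^ k = (-1) ^ k * θ ^ (2 * k) := by rw [neg_pow, pow_mul]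
  rw [hnp]
  field_simp
  ring

open Nat NormedSpace in
lemma exp_sub_exp_neg (A : M3) (θ : ℝ) (hθ : 0 < θ)
    (hcube : A ^ 3 = (-(θ ^ 2)) • A) :
    mExp A - mExp (-A) = (2 * Real.sin θ / θ) • A := by
  have hsum : HasSum (fun n : ℕ => ((n ! : ℝ))⁻¹ • A ^ n - ((n ! : ℝ))⁻¹ • (-A) ^ n)
      ((2 * Real.sin θ / θ) • A) := by
    have heven : HasSum (fun k : ℕ =>
        (((2 * k)! : ℝ))⁻¹ • A ^ (2 * k) - (((2 * k)! : ℝ))⁻¹ • (-A) ^ (2 * k)) 0 := by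
      have h0 : (fun k : ℕ =>
          (((2 * k)! : ℝ))⁻¹ • A ^ (2 * k) - (((2 * k)! : ℝ))⁻¹ • (-A) ^ (2 * k))
          = fun _ => 0 := by
        funext k
        rw [Even.neg_pow ⟨k, by ring⟩, sub_self]
      rw [h0]; exact hasSum_zero
    have hoddsum : HasSum (fun k : ℕ =>
        (((2 * k + 1)! : ℝ))⁻¹ • A ^ (2 * k + 1)
          - (((2 * k + 1)! : ℝ))⁻¹ • (-A) ^ (2 * k + 1))
        ((2 * Real.sin θ / θ) • A) := by
      have hs := ((Real.hasSum_sin θ).mul_left (2 / θ)).smul_const A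
      have hc : 2 / θ * Real.sin θ = 2 * Real.sin θ / θ := by ring
      rw [hc] at hs
      simp_rw [oddterm_eq A θ hθ hcube]
      exact hs
    have hEO := HasSum.even_add_odd
      (f := fun n : ℕ => ((n ! : ℝ))⁻¹ • A ^ n - ((n ! : ℝ))⁻¹ • (-A) ^ n) heven hoddsum
    simpa using hEO
  letI : SeminormedRing M3 := Matrix.linftyOpSemiNormedRing
  letI : NormedRing M3 := Matrix.linftyOpNormedRing
  letI : NormedAlgebra ℝ M3 := Matrix.linftyOpNormedAlgebra
  have h1 : Summable fun n : ℕ => ((n ! : ℝ))⁻¹ • A ^ n := expSeries_summable' A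
  have h2 : Summable fun n : ℕ => ((n ! : ℝ))⁻¹ • (-A) ^ n := expSeries_summable' (-A)
  have key := hsum.tsum_eq
  rw [Summable.tsum_sub h1 h2] at key
  rw [mExp, mExp, exp_eq_tsum ℝ]
  exact key

/-- `e^i(R)` in terms of the log vector: `eVec Ri R = (2 sin θ / θ) • v`. -/
lemma eVec_eq (Ri R : M3) (v : Fin 3 → ℝ) (hv0 : 0 < norm2 v)
    (hexp : mExp (hat v) = Rᵀ * Ri) :
    eVec Ri R = (2 * Real.sin (norm2 v) / norm2 v) • v := by
  have htr : (Rᵀ * Ri)ᵀ = mExp (-(hat v)) := by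
    rw [← hexp, mExp, mExp, ← Matrix.exp_transpose, hat_transpose]
  have h := exp_sub_exp_neg (hat v) (norm2 v) hv0 (hat_cube' v)
  rw [eVec, htr, ← hexp, h, vee_smul_hat]

/-- Proposition 3, case 2: if `exp([v_j]×) = RᵀR_j`, `exp([v_k]×) = RᵀR_k`
with `0 < ‖v_j‖₂, ‖v_k‖₂ < π`, and `μ_j·e^j(R) + μ_k·e^k(R) = 0` with `μ_j, μ_k > 0`, then
`v_j ∥ v_k`. -/
theorem singular_point_two_cells (R Rj Rk : M3) (hR : SO3 R) (hRj : SO3 Rj) (hRk : SO3 Rk)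
    (vj vk : Fin 3 → ℝ)
    (hvj0 : 0 < norm2 vj) (hvjpi : norm2 vj < π)
    (hvk0 : 0 < norm2 vk) (hvkpi : norm2 vk < π)
    (hexpj : mExp (hat vj) = Rᵀ * Rj) (hexpk : mExp (hat vk) = Rᵀ * Rk)
    (μj μk : ℝ) (hμj : 0 < μj) (hμk : 0 < μk)
    (hsum : μj • eVec Rj R + μk • eVec Rk R = 0) :
    ∃ lam : ℝ, vk = lam • vj := by
  have hej := eVec_eq Rj R vj hvj0 hexpj
  have hek := eVec_eq Rk R vk hvk0 hexpk
  set cj : ℝ := 2 * Real.sin (norm2 vj) / norm2 vj with hcj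
  set ck : ℝ := 2 * Real.sin (norm2 vk) / norm2 vk with hck
  have hckpos : 0 < ck := by
    have : 0 < Real.sin (norm2 vk) := Real.sin_pos_of_pos_of_lt_pi hvk0 hvkpi
    positivity
  rw [hej, hek, smul_smul, smul_smul] at hsum
  have hkey : (μk * ck) • vk = (-(μj * cj)) • vj := by
    rw [neg_smul, eq_neg_iff_add_eq_zero, add_comm]
    exact hsum
  refine ⟨(μk * ck)⁻¹ * (-(μj * cj)), ?_⟩
  have hne : (μk * ck) ≠ 0 := by positivity
  rw [mul_smul, ← hkey, smul_smul, inv_mul_cancel₀ hne, one_smul]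
end
end

section
/- Consider the state space {(R, ω) : R ∈ SO(3), ω ∈ ℝ³} with drift vector field f given by the unforced attitude dynamics Ṙ = R[ω]×, J·ω̇ = −[ω]×Jω, where J is a symmetric positive definite 3×3 matrix. Let θ ∈ (0,π/2), ε := 4 sin²(θ/2), N finite, centers R_i ∈ SO(3), δ > 0, and h(R) := Σ_{i∈N} s(r_i(R)/ε) − δ. Let ξ > 0 be a constant such that every (R,ω) with h(R) ≥ 0 and L_g L_f h(R,ω) = 0 satisfies h(R) ≥ ξ, where L_f h(R,ω) = (1/ε)·Σ_{i∈N} s′(r_i(R)/ε)·ωᵀe^i(R) and L_g L_f h(R,ω) = (1/ε)·Σ_{i∈N} s′(r_i(R)/ε)·e^i(R)ᵀJ⁻¹. Let χ : ℝ → ℝ be twice differentiable with χ(0) = 0, χ(a) = 1 for all a ≥ 1, and χ′(a) > 0 for all a < 1; let α, β : ℝ → ℝ be continuously differentiable, strictly increasing functions with α(0) = β(0) = 0. Define b(R,ω) := χ(h(R)/ξ) and b₁ := L_f b + α∘b. Then for every state (R,ω) with b(R,ω) ≥ 0 and b₁(R,ω) ≥ 0, there exists u ∈ ℝ³ such that L_g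 b₁(R,ω)·u + L_f b₁(R,ω) + β(b₁(R,ω)) ≥ 0. -/
open Matrix Real Set

noncomputable section

/-- The barrier function `h(R) := Σ_{i∈N} s(r_i(R)/ε) − δ`. -/
noncomputable def hBar {ι : Type*} (N : Finset ι) (Rc : ι → M3) (ε δ : ℝ) (R : M3) : ℝ :=
  (∑ i ∈ N, sFun (rBar ε (Rc i) R / ε)) - δ


/-! ### Auxiliary lemmas -/

namespace CBFAux

open Polynomial ContinuousLinearMap

noncomputable def rh (x : ℝ) : ℝ := x⁻¹ * expNegInvGlue x

lemma rh_contDiff {n : ℕ∞} : ContDiff ℝ n rh := by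
  have h := expNegInvGlue.contDiff_polynomial_eval_inv_mul (n := n) (X : ℝ[X])
  simp only [Polynomial.eval_X] at h
  exact h

lemma rh_nonpos {x : ℝ} (hx : x ≤ 0) : rh x = 0 := by
  simp [rh, expNegInvGlue.zero_of_nonpos hx]

lemma rh_eq_rho {x : ℝ} (hx : 0 < x) : rh x = rhoFun x := by
  simp [rh, rhoFun, expNegInvGlue, hx.not_ge, one_div, neg_div]

lemma rh_pos {x : ℝ} (hx : 0 < x) : 0 < rh x :=
  mul_pos (inv_pos.2 hx) (expNegInvGlue.pos_of_pos hx)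

lemma rh_nonneg (x : ℝ) : 0 ≤ rh x := by
  rcases le_or_gt x 0 with h | h
  · simp [rh_nonpos h]
  · exact (rh_pos h).le

lemma rh_denom_pos (x : ℝ) : 0 < rh x + rh (1 - x) := by
  rcases le_or_gt x 0 with h | h
  · have : 0 < rh (1 - x) := rh_pos (by linarith)
    linarith [rh_nonneg x]
  · linarith [rh_pos h, rh_nonneg (1 - x)]

lemma sFun_eq (x : ℝ) : sFun x = rh x / (rh x + rh (1 - x)) := by
  rcases lt_trichotomy x 0 with h | h | h
  · simp [sFun, h, rh_nonpos h.le]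
  · subst h
    rw [sFun, if_neg (lt_irrefl 0), if_pos one_pos, rh_nonpos le_rfl, zero_div]
    simp [rhoFun]
  · rcases lt_trichotomy x 1 with h1 | h1 | h1
    · rw [sFun, if_neg (not_lt.2 h.le), if_pos h1, rh_eq_rho h, rh_eq_rho (by linarith)]
    · subst h1
      rw [sFun, if_neg (by norm_num), if_neg (by norm_num)]
      have h0 : rh (1 - 1) = 0 := rh_nonpos (by norm_num)
      rw [h0, add_zero, div_self (rh_pos h).ne']
    · rw [sFun, if_neg (not_lt.2 h.le), if_neg (not_lt.2 h1.le)]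
      have h0 : rh (1 - x) = 0 := rh_nonpos (by linarith)
      rw [h0, add_zero, div_self (rh_pos h).ne']

lemma sFun_contDiff {n : ℕ∞} : ContDiff ℝ n sFun := by
  have h : ContDiff ℝ n fun x => rh x / (rh x + rh (1 - x)) :=
    rh_contDiff.div (rh_contDiff.add (rh_contDiff.comp (contDiff_const.sub contDiff_id)))
      fun x => (rh_denom_pos x).ne'
  have he : sFun = fun x => rh x / (rh x + rh (1 - x)) := funext sFun_eq
  rw [he]; exact h

lemma deriv_zero_of_const_Ici {f : ℝ → ℝ} (hf : Differentiable ℝ f) {c : ℝ}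
    (hconst : ∀ a, c ≤ a → f a = f c) : ∀ a, c ≤ a → deriv f a = 0 := by
  intro a ha
  rcases eq_or_lt_of_le ha with rfl | h
  · have h1 : HasDerivWithinAt f 0 (Set.Ici c) c :=
      (hasDerivWithinAt_const c (Set.Ici c) (f c)).congr (fun x hx => hconst x hx) (by simp)
    have h2 : HasDerivWithinAt f (deriv f c) (Set.Ici c) c := (hf c).hasDerivAt.hasDerivWithinAt
    exact (uniqueDiffOn_Ici c c Set.self_mem_Ici).eq_deriv _ h2 h1
  · have heq : f =ᶠ[nhds a] fun _ => f c := by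
      filter_upwards [lt_mem_nhds h] with y hy using hconst y hy.le
    rw [heq.deriv_eq, deriv_const]

lemma trace_transpose_mul (A : M3) : Matrix.trace (Aᵀ * A) = ∑ a : Fin 3, ∑ b : Fin 3, (A a b)^2 := by
  rw [Matrix.trace]
  simp only [Matrix.diag, Matrix.mul_apply, Matrix.transpose_apply, sq]
  exact Finset.sum_comm

lemma frob_sq (A : M3) : frob A ^ 2 = ∑ a : Fin 3, ∑ b : Fin 3, (A a b)^2 := by
  rw [frob, Real.sq_sqrt, trace_transpose_mul]
  rw [trace_transpose_mul]
  positivity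

lemma rBar_eq (ε : ℝ) (C R : M3) :
    rBar ε C R = ε - (∑ a : Fin 3, ∑ b : Fin 3, (C a b - R a b)^2) / 2 := by
  rw [rBar, frob_sq]
  simp [Matrix.sub_apply]

end CBFAux

attribute [local instance] Matrix.normedAddCommGroup Matrix.normedSpace

/-- The state space `{(R,ω)}`, embedded in `ℝ^{3×3} × ℝ³`. -/
abbrev AttState := M3 × (Fin 3 → ℝ)

/-- The drift vector field `f` of the unforced attitude dynamics:
`Ṙ = R[ω]×`, `ω̇ = J⁻¹(−[ω]×Jω)`. -/
noncomputable def drift (J : M3) (p : AttState) : AttState :=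
  (p.1 * hat p.2, J⁻¹ *ᵥ (-(hat p.2 *ᵥ (J *ᵥ p.2))))

/-- Lie derivative `L_f φ` along the drift: the derivative of `φ` at `p` in the direction of the
drift vector field. -/
noncomputable def LieF (J : M3) (φ : AttState → ℝ) (p : AttState) : ℝ :=
  fderiv ℝ φ p (drift J p)

/-- Lie derivative `L_g φ = (∇_ω φ)ᵀ·J⁻¹` along the input matrix `g = (0; J⁻¹)`, as a vector in
`ℝ³` (the `j`-th entry differentiates in the direction `(0, (J⁻¹ column j))`). -/
noncomputable def LieG (J : M3) (φ : AttState → ℝ) (p : AttState) : Fin 3 → ℝ :=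
  fun j => fderiv ℝ φ p (0, fun k => J⁻¹ k j)

/-- The truncated barrier function `b(R,ω) := χ(h(R)/ξ)`. -/
noncomputable def bFun {ι : Type*} (N : Finset ι) (Rc : ι → M3) (ε δ ξ : ℝ) (χ : ℝ → ℝ)
    (p : AttState) : ℝ :=
  χ (hBar N Rc ε δ p.1 / ξ)

/-- `b₁ := L_f b + α ∘ b`. -/
noncomputable def b1Fun {ι : Type*} (N : Finset ι) (Rc : ι → M3) (ε δ ξ : ℝ) (χ α : ℝ → ℝ)
    (J : M3) (p : AttState) : ℝ :=
  LieF J (bFun N Rc ε δ ξ χ) p + α (bFun N Rc ε δ ξ χ p)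


namespace CBFAux

open ContinuousLinearMap

noncomputable def entryCLM (a b : Fin 3) : M3 →L[ℝ] ℝ :=
  (ContinuousLinearMap.proj b : (Fin 3 → ℝ) →L[ℝ] ℝ).comp
    (ContinuousLinearMap.proj a : (∀ _ : Fin 3, Fin 3 → ℝ) →L[ℝ] (Fin 3 → ℝ))

@[simp] lemma entryCLM_apply (a b : Fin 3) (V : M3) : entryCLM a b V = V a b := rfl

lemma hasFDerivAt_entry (a b : Fin 3) (R : M3) :
    HasFDerivAt (fun R : M3 => R a b) (entryCLM a b) R :=
  ((entryCLM a b).hasFDerivAt (x := R)).congr_of_eventuallyEq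
    (Filter.Eventually.of_forall fun S => rfl)

lemma hasFDerivAt_rBar (ε : ℝ) (C : M3) (R : M3) :
    HasFDerivAt (fun R : M3 => rBar ε C R)
      (∑ a : Fin 3, ∑ b : Fin 3, (C a b - R a b) • entryCLM a b) R := by
  have hre : (fun R : M3 => rBar ε C R)
      = fun R : M3 => ε - 2⁻¹ * (∑ a : Fin 3, ∑ b : Fin 3, (C a b - R a b) * (C a b - R a b)) := by
    funext S
    rw [rBar_eq ε C S]
    simp only [pow_two]
    ring
  rw [hre]
  have hsq : HasFDerivAt
      (fun R : M3 => ∑ a : Fin 3, ∑ b : Fin 3, (C a b - R a b) * (C a b - R a b))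
      (∑ a : Fin 3, ∑ b : Fin 3, ((C a b - R a b) • (-(entryCLM a b))
        + (C a b - R a b) • (-(entryCLM a b)))) R := by
    apply HasFDerivAt.fun_sum
    intro a _
    apply HasFDerivAt.fun_sum
    intro b _
    exact ((hasFDerivAt_entry a b R).const_sub (C a b)).mul
      ((hasFDerivAt_entry a b R).const_sub (C a b))
  have hfd := (hsq.const_mul (2⁻¹ : ℝ)).const_sub ε
  have hEq : (∑ a : Fin 3, ∑ b : Fin 3, (C a b - R a b) • entryCLM a b : M3 →L[ℝ] ℝ)
      = -((2⁻¹ : ℝ) • ∑ a : Fin 3, ∑ b : Fin 3, ((C a b - R a b) • (-(entryCLM a b))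
        + (C a b - R a b) • (-(entryCLM a b)))) := by
    ext V
    simp only [ContinuousLinearMap.sum_apply, ContinuousLinearMap.smul_apply,
      ContinuousLinearMap.neg_apply, entryCLM_apply, ContinuousLinearMap.coe_smul',
      Pi.smul_apply, smul_eq_mul, ContinuousLinearMap.coe_sub', Pi.sub_apply,
      ContinuousLinearMap.zero_apply, Finset.mul_sum, mul_neg, mul_add, neg_add_rev, neg_neg]
    rw [← Finset.sum_neg_distrib]
    refine Finset.sum_congr rfl fun a _ => ?_
    rw [← Finset.sum_neg_distrib]
    refine Finset.sum_congr rfl fun b _ => ?_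
    simp only [ContinuousLinearMap.add_apply, ContinuousLinearMap.smul_apply,
      ContinuousLinearMap.neg_apply, entryCLM_apply, smul_eq_mul]
    ring
  exact hfd.congr_fderiv hEq.symm

noncomputable def LH {ι : Type*} (N : Finset ι) (Rc : ι → M3) (ε : ℝ) (R : M3) : M3 →L[ℝ] ℝ :=
  ∑ i ∈ N, (deriv sFun (rBar ε (Rc i) R / ε) * ε⁻¹) •
    (∑ a : Fin 3, ∑ b : Fin 3, (Rc i a b - R a b) • entryCLM a b)

lemma sFun_hasDerivAt (x : ℝ) : HasDerivAt sFun (deriv sFun x) x :=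
  (((sFun_contDiff (n := 1)).differentiable (by simp)) x).hasDerivAt

lemma hasFDerivAt_sr (ε : ℝ) (C R : M3) :
    HasFDerivAt (fun R : M3 => sFun (rBar ε C R / ε))
      ((deriv sFun (rBar ε C R / ε) * ε⁻¹) •
        (∑ a : Fin 3, ∑ b : Fin 3, (C a b - R a b) • entryCLM a b)) R := by
  have h1 : HasFDerivAt (fun R : M3 => rBar ε C R / ε)
      (ε⁻¹ • (∑ a : Fin 3, ∑ b : Fin 3, (C a b - R a b) • entryCLM a b)) R := by
    have h := (hasFDerivAt_rBar ε C R).const_mul ε⁻¹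
    refine h.congr_of_eventuallyEq (Filter.Eventually.of_forall fun S => ?_)
    exact div_eq_inv_mul _ _
  have h2 := (sFun_hasDerivAt (rBar ε C R / ε)).comp_hasFDerivAt R h1
  exact h2.congr_fderiv (smul_smul _ _ _)

lemma hasFDerivAt_hBar {ι : Type*} (N : Finset ι) (Rc : ι → M3) (ε δ : ℝ) (R : M3) :
    HasFDerivAt (hBar N Rc ε δ) (LH N Rc ε R) R := by
  have he : hBar N Rc ε δ = fun R => (∑ i ∈ N, sFun (rBar ε (Rc i) R / ε)) - δ := rfl
  rw [he, LH]
  exact (HasFDerivAt.fun_sum fun i _ => hasFDerivAt_sr ε (Rc i) R).sub_const δ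

lemma LH_apply {ι : Type*} (N : Finset ι) (Rc : ι → M3) (ε : ℝ) (R V : M3) :
    LH N Rc ε R V = ∑ i ∈ N, (deriv sFun (rBar ε (Rc i) R / ε) * ε⁻¹) *
      (∑ a : Fin 3, ∑ b : Fin 3, (Rc i a b - R a b) * V a b) := by
  simp [LH, ContinuousLinearMap.sum_apply, ContinuousLinearMap.smul_apply, smul_eq_mul]

lemma hat_add (v w : Fin 3 → ℝ) : hat (v + w) = hat v + hat w := by
  ext i j
  fin_cases i <;> fin_cases j <;> simp [hat] <;> ring

lemma hat_smul (c : ℝ) (v : Fin 3 → ℝ) : hat (c • v) = c • hat v := by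
  ext i j
  fin_cases i <;> fin_cases j <;> simp [hat] <;> ring

noncomputable def mulHatCLM (R : M3) : (Fin 3 → ℝ) →L[ℝ] M3 :=
  LinearMap.toContinuousLinearMap
    { toFun := fun w => R * hat w
      map_add' := fun x y => by
        show R * hat (x + y) = R * hat x + R * hat y
        rw [hat_add, Matrix.mul_add]
      map_smul' := fun c x => by
        show R * hat (c • x) = c • (R * hat x)
        rw [hat_smul, Matrix.mul_smul] }

@[simp] lemma mulHatCLM_apply (R : M3) (w : Fin 3 → ℝ) : mulHatCLM R w = R * hat w := rfl

lemma dir_identity (C R : M3) (v : Fin 3 → ℝ) :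
    (∑ a : Fin 3, ∑ b : Fin 3, (C a b - R a b) * (R * hat v) a b)
      = ∑ k, eVec C R k * v k := by
  simp only [eVec, vee, Matrix.mul_apply, Matrix.sub_apply, Matrix.transpose_apply,
    Fin.sum_univ_three]
  simp only [hat, Matrix.cons_val_zero, Matrix.cons_val_one, Matrix.head_cons,
    Matrix.cons_val_two, Matrix.tail_cons, Matrix.of_apply, Matrix.cons_val',
    Matrix.empty_val', Matrix.cons_val_fin_one, Matrix.head_fin_const]
  ring

lemma LH_mulhat {ι : Type*} (N : Finset ι) (Rc : ι → M3) (ε : ℝ) (R : M3)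
    (v : Fin 3 → ℝ) :
    LH N Rc ε R (R * hat v)
      = (1/ε) * ∑ i ∈ N, deriv sFun (rBar ε (Rc i) R / ε) * (∑ k, eVec (Rc i) R k * v k) := by
  rw [LH_apply, Finset.mul_sum]
  refine Finset.sum_congr rfl fun i _ => ?_
  rw [dir_identity (Rc i) R v]
  ring

lemma diff_fst_entry (a b : Fin 3) : Differentiable ℝ (fun q : AttState => q.1 a b) := by
  have h := ((entryCLM a b).comp
    (ContinuousLinearMap.fst ℝ M3 (Fin 3 → ℝ))).differentiable
  exact h

lemma diff_snd_entry (k : Fin 3) : Differentiable ℝ (fun q : AttState => q.2 k) := by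
  have h := ((ContinuousLinearMap.proj k : (Fin 3 → ℝ) →L[ℝ] ℝ).comp
    (ContinuousLinearMap.snd ℝ M3 (Fin 3 → ℝ))).differentiable
  exact h

lemma diff_hat_entry (c b : Fin 3) : Differentiable ℝ (fun q : AttState => hat q.2 c b) := by
  fin_cases c <;> fin_cases b <;> simp only [hat, Matrix.cons_val_zero, Matrix.cons_val_one,
    Matrix.head_cons, Matrix.cons_val_two, Matrix.tail_cons, Matrix.of_apply, Matrix.cons_val',
    Matrix.empty_val', Matrix.cons_val_fin_one, Matrix.head_fin_const] <;>
  first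
    | exact differentiable_const _
    | exact diff_snd_entry _
    | exact (diff_snd_entry _).neg

lemma diff_mulhat_entry (a b : Fin 3) :
    Differentiable ℝ (fun q : AttState => (q.1 * hat q.2) a b) := by
  have he : (fun q : AttState => (q.1 * hat q.2) a b)
      = fun q : AttState => ∑ c : Fin 3, q.1 a c * hat q.2 c b :=
    funext fun q => Matrix.mul_apply
  rw [he]
  exact Differentiable.fun_sum fun c _ => (diff_fst_entry a c).fun_mul (diff_hat_entry c b)

lemma diff_rBar_fst (ε : ℝ) (C : M3) : Differentiable ℝ (fun q : AttState => rBar ε C q.1) :=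
  fun p => ((hasFDerivAt_rBar ε C p.1).comp p (hasFDerivAt_fst)).differentiableAt

lemma hs'_diff : Differentiable ℝ (deriv sFun) :=
  (contDiff_infty_iff_deriv.mp (sFun_contDiff (n := ⊤))).2.differentiable
    (by simp)

lemma diff_div_const {f : AttState → ℝ} (hf : Differentiable ℝ f) (c : ℝ) :
    Differentiable ℝ fun q : AttState => f q / c := by
  simp only [div_eq_mul_inv]
  exact hf.mul_const c⁻¹

lemma diff_Phi {ι : Type*} (N : Finset ι) (Rc : ι → M3) (ε : ℝ) :
    Differentiable ℝ (fun q : AttState => LH N Rc ε q.1 (q.1 * hat q.2)) := by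
  have he : (fun q : AttState => LH N Rc ε q.1 (q.1 * hat q.2))
      = fun q : AttState => ∑ i ∈ N, (deriv sFun (rBar ε (Rc i) q.1 / ε) * ε⁻¹) *
          (∑ a : Fin 3, ∑ b : Fin 3, (Rc i a b - q.1 a b) * (q.1 * hat q.2) a b) :=
    funext fun q => LH_apply N Rc ε q.1 (q.1 * hat q.2)
  rw [he]
  refine Differentiable.fun_sum fun i _ => Differentiable.fun_mul ?_ ?_
  · exact (hs'_diff.comp (diff_div_const (diff_rBar_fst ε (Rc i)) ε)).mul_const ε⁻¹
  · exact Differentiable.fun_sum fun a _ => Differentiable.fun_sum fun b _ =>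
      ((differentiable_const (Rc i a b)).sub (diff_fst_entry a b)).fun_mul (diff_mulhat_entry a b)

lemma diff_hBar_fst {ι : Type*} (N : Finset ι) (Rc : ι → M3) (ε δ : ℝ) :
    Differentiable ℝ (fun q : AttState => hBar N Rc ε δ q.1) :=
  fun p => ((hasFDerivAt_hBar N Rc ε δ p.1).comp p hasFDerivAt_fst).differentiableAt

lemma hasFDerivAt_hq {ι : Type*} (N : Finset ι) (Rc : ι → M3) (ε δ ξ : ℝ) (q : AttState) :
    HasFDerivAt (fun q : AttState => hBar N Rc ε δ q.1 / ξ)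
      (ξ⁻¹ • ((LH N Rc ε q.1).comp (ContinuousLinearMap.fst ℝ M3 (Fin 3 → ℝ)))) q := by
  have h1 : HasFDerivAt (fun q : AttState => hBar N Rc ε δ q.1)
      ((LH N Rc ε q.1).comp (ContinuousLinearMap.fst ℝ M3 (Fin 3 → ℝ))) q :=
    (hasFDerivAt_hBar N Rc ε δ q.1).comp q hasFDerivAt_fst
  have h2 := h1.const_mul ξ⁻¹
  exact h2.congr_of_eventuallyEq (Filter.Eventually.of_forall fun S => div_eq_inv_mul _ _)

lemma b1Fun_eq {ι : Type*} (N : Finset ι) (Rc : ι → M3) (ε δ ξ : ℝ) (χ α : ℝ → ℝ)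
    (hχdiff : Differentiable ℝ χ) (J : M3) :
    b1Fun N Rc ε δ ξ χ α J = fun q : AttState =>
      (deriv χ (hBar N Rc ε δ q.1 / ξ) * ξ⁻¹) * (LH N Rc ε q.1 (q.1 * hat q.2))
        + α (χ (hBar N Rc ε δ q.1 / ξ)) := by
  funext q
  have hbb : bFun N Rc ε δ ξ χ = fun q : AttState => χ (hBar N Rc ε δ q.1 / ξ) := rfl
  have hb : HasFDerivAt (bFun N Rc ε δ ξ χ)
      ((deriv χ (hBar N Rc ε δ q.1 / ξ)) •
        (ξ⁻¹ • ((LH N Rc ε q.1).comp (ContinuousLinearMap.fst ℝ M3 (Fin 3 → ℝ))))) q := by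
    rw [hbb]
    exact (hχdiff _).hasDerivAt.comp_hasFDerivAt q (hasFDerivAt_hq N Rc ε δ ξ q)
  have hLieF : LieF J (bFun N Rc ε δ ξ χ) q
      = (deriv χ (hBar N Rc ε δ q.1 / ξ) * ξ⁻¹) * LH N Rc ε q.1 (q.1 * hat q.2) := by
    rw [LieF, hb.fderiv]
    simp only [ContinuousLinearMap.smul_apply, ContinuousLinearMap.coe_comp',
      ContinuousLinearMap.coe_fst', Function.comp_apply, smul_eq_mul, drift]
    ring
  rw [b1Fun, hLieF, hbb]

lemma diff_Psi {ι : Type*} (N : Finset ι) (Rc : ι → M3) (ε δ ξ : ℝ) (χ α : ℝ → ℝ)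
    (hχdiff : Differentiable ℝ χ) (hχdiff2 : Differentiable ℝ (deriv χ))
    (hαdiff : Differentiable ℝ α) :
    Differentiable ℝ (fun q : AttState =>
      (deriv χ (hBar N Rc ε δ q.1 / ξ) * ξ⁻¹) * (LH N Rc ε q.1 (q.1 * hat q.2))
        + α (χ (hBar N Rc ε δ q.1 / ξ))) := by
  have hdiv : Differentiable ℝ (fun q : AttState => hBar N Rc ε δ q.1 / ξ) :=
    diff_div_const (diff_hBar_fst N Rc ε δ) ξ
  have h1 : Differentiable ℝ (fun q : AttState => deriv χ (hBar N Rc ε δ q.1 / ξ)) :=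
    hχdiff2.comp hdiv
  have h2 : Differentiable ℝ (fun q : AttState => α (χ (hBar N Rc ε δ q.1 / ξ))) :=
    hαdiff.comp (hχdiff.comp hdiv)
  exact ((h1.mul_const ξ⁻¹).mul (diff_Phi N Rc ε)).add h2

lemma fderiv_section_Psi {ι : Type*} (N : Finset ι) (Rc : ι → M3) (ε δ ξ : ℝ) (χ α : ℝ → ℝ)
    (hχdiff : Differentiable ℝ χ) (hχdiff2 : Differentiable ℝ (deriv χ))
    (hαdiff : Differentiable ℝ α) (R : M3) (ω v : Fin 3 → ℝ) :
    fderiv ℝ (fun q : AttState =>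
        (deriv χ (hBar N Rc ε δ q.1 / ξ) * ξ⁻¹) * (LH N Rc ε q.1 (q.1 * hat q.2))
          + α (χ (hBar N Rc ε δ q.1 / ξ))) (R, ω) ((0 : M3), v)
      = (deriv χ (hBar N Rc ε δ R / ξ) * ξ⁻¹) * LH N Rc ε R (R * hat v) := by
  set Ψ : AttState → ℝ := fun q =>
    (deriv χ (hBar N Rc ε δ q.1 / ξ) * ξ⁻¹) * (LH N Rc ε q.1 (q.1 * hat q.2))
      + α (χ (hBar N Rc ε δ q.1 / ξ)) with hΨdef
  have hg : HasFDerivAt (fun w : Fin 3 → ℝ => ((R, w) : AttState))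
      ((0 : (Fin 3 → ℝ) →L[ℝ] M3).prod (ContinuousLinearMap.id ℝ (Fin 3 → ℝ))) ω :=
    HasFDerivAt.prodMk (hasFDerivAt_const R ω) (hasFDerivAt_id ω)
  have hΨfd : HasFDerivAt Ψ (fderiv ℝ Ψ (R, ω)) (R, ω) :=
    (diff_Psi N Rc ε δ ξ χ α hχdiff hχdiff2 hαdiff (R, ω)).hasFDerivAt
  have hcomp := hΨfd.comp ω hg
  have hsec : HasFDerivAt (fun w : Fin 3 → ℝ => Ψ (R, w))
      ((deriv χ (hBar N Rc ε δ R / ξ) * ξ⁻¹) • ((LH N Rc ε R).comp (mulHatCLM R))) ω := by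
    have hlin := ((LH N Rc ε R).comp (mulHatCLM R)).hasFDerivAt (x := ω)
    have h2 := (hlin.const_mul (deriv χ (hBar N Rc ε δ R / ξ) * ξ⁻¹)).add_const
      (α (χ (hBar N Rc ε δ R / ξ)))
    refine h2.congr_of_eventuallyEq (Filter.Eventually.of_forall fun w => ?_)
    simp only [hΨdef, ContinuousLinearMap.coe_comp', Function.comp_apply, mulHatCLM_apply]
  have huniq := hcomp.unique hsec
  have happ := congrArg (fun (L : (Fin 3 → ℝ) →L[ℝ] ℝ) => L v) huniq
  simp only [ContinuousLinearMap.coe_comp', Function.comp_apply,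
    ContinuousLinearMap.prod_apply, ContinuousLinearMap.coe_zero, Pi.zero_apply,
    ContinuousLinearMap.coe_id', id_eq, ContinuousLinearMap.smul_apply, smul_eq_mul,
    mulHatCLM_apply] at happ
  exact happ

lemma hasFDerivAt_Psi_zero {ι : Type*} (N : Finset ι) (Rc : ι → M3) (ε δ ξ : ℝ)
    (χ α : ℝ → ℝ) (hχdiff : Differentiable ℝ χ) (hχdiff2 : Differentiable ℝ (deriv χ))
    (hαdiff : Differentiable ℝ α) (R : M3) (ω : Fin 3 → ℝ)
    (hc0 : deriv χ (hBar N Rc ε δ R / ξ) = 0)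
    (hc2 : deriv (deriv χ) (hBar N Rc ε δ R / ξ) = 0) :
    HasFDerivAt (fun q : AttState =>
        (deriv χ (hBar N Rc ε δ q.1 / ξ) * ξ⁻¹) * (LH N Rc ε q.1 (q.1 * hat q.2))
          + α (χ (hBar N Rc ε δ q.1 / ξ))) (0 : AttState →L[ℝ] ℝ) (R, ω) := by
  have h1 := hasFDerivAt_hq N Rc ε δ ξ ((R, ω) : AttState)
  have h2 := (hχdiff2 (hBar N Rc ε δ R / ξ)).hasDerivAt
  rw [hc2] at h2
  have h3 := h2.comp_hasFDerivAt ((R, ω) : AttState) h1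
  replace h3 := h3.congr_fderiv (zero_smul _ _)
  have h4 := h3.mul_const ξ⁻¹
  replace h4 := h4.congr_fderiv (smul_zero _)
  have h5 := h4.mul ((diff_Phi N Rc ε ((R, ω) : AttState)).hasFDerivAt)
  have h6 := (hχdiff (hBar N Rc ε δ R / ξ)).hasDerivAt
  rw [hc0] at h6
  have h7 := h6.comp_hasFDerivAt ((R, ω) : AttState) h1
  replace h7 := h7.congr_fderiv (zero_smul _ _)
  have h8 := (hαdiff (χ (hBar N Rc ε δ R / ξ))).hasDerivAt.comp_hasFDerivAt ((R, ω) : AttState) h7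
  replace h8 := h8.congr_fderiv (smul_zero _)
  have h9 := h5.add h8
  have h10 := h9.congr_fderiv (show _ = (0 : AttState →L[ℝ] ℝ) by simp [hc0]; exact zero_smul _ _)
  exact h10

end CBFAux

/-- Proposition 4, feasibility of the CBF constraint: under the stated
assumptions on `J`, `χ`, `α`, `β` and the singular-set constant `ξ`, for every state `(R,ω)` with
`b(R,ω) ≥ 0` and `b₁(R,ω) ≥ 0` there exists `u ∈ ℝ³` with
`L_g b₁(R,ω)·u + L_f b₁(R,ω) + β(b₁(R,ω)) ≥ 0`. -/
theorem cbf_constraint_feasible {ι : Type*} (N : Finset ι) (Rc : ι → M3)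
    (θ ε δ ξ : ℝ) (hθ : 0 < θ) (hθ' : θ < π / 2) (hε : ε = 4 * Real.sin (θ / 2) ^ 2)
    (hδ : 0 < δ) (hξ : 0 < ξ)
    (hSO : ∀ i ∈ N, SO3 (Rc i))
    (J : M3) (hJ : J.PosDef) (hJsym : Jᵀ = J)
    (χ α β : ℝ → ℝ)
    (hχdiff : Differentiable ℝ χ) (hχdiff2 : Differentiable ℝ (deriv χ))
    (hχ0 : χ 0 = 0) (hχ1 : ∀ a, 1 ≤ a → χ a = 1) (hχ' : ∀ a, a < 1 → 0 < deriv χ a)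
    (hα : ContDiff ℝ 1 α) (hαmono : StrictMono α) (hα0 : α 0 = 0)
    (hβ : ContDiff ℝ 1 β) (hβmono : StrictMono β) (hβ0 : β 0 = 0)
    (hsing : ∀ (R : M3) (ω : Fin 3 → ℝ), SO3 R → 0 ≤ hBar N Rc ε δ R →
      (∀ j, (1 / ε) * ∑ i ∈ N, deriv sFun (rBar ε (Rc i) R / ε) *
        (∑ k, eVec (Rc i) R k * J⁻¹ k j) = 0) →
      ξ ≤ hBar N Rc ε δ R) :
    ∀ (R : M3) (ω : Fin 3 → ℝ), SO3 R →
      0 ≤ bFun N Rc ε δ ξ χ (R, ω) →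
      0 ≤ b1Fun N Rc ε δ ξ χ α J (R, ω) →
      ∃ u : Fin 3 → ℝ,
        0 ≤ (∑ j, LieG J (b1Fun N Rc ε δ ξ χ α J) (R, ω) j * u j) +
            LieF J (b1Fun N Rc ε δ ξ χ α J) (R, ω) +
            β (b1Fun N Rc ε δ ξ χ α J (R, ω)) := by
  intro R ω hSOR hb0 hb10
  have hαdiff : Differentiable ℝ α := hα.differentiable one_ne_zero
  have hb1e := CBFAux.b1Fun_eq N Rc ε δ ξ χ α hχdiff J
  have hχconst : ∀ a, 1 ≤ a → deriv χ a = 0 :=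
    CBFAux.deriv_zero_of_const_Ici hχdiff (c := 1)
      (fun a ha => by rw [hχ1 a ha, hχ1 1 le_rfl])
  have hχ2const : ∀ a, 1 ≤ a → deriv (deriv χ) a = 0 := by
    refine CBFAux.deriv_zero_of_const_Ici hχdiff2 (c := 1) (fun a ha => ?_)
    rw [hχconst a ha, hχconst 1 le_rfl]
  by_cases hLG : ∀ j, LieG J (b1Fun N Rc ε δ ξ χ α J) (R, ω) j = 0
  · -- all ω-directional derivatives vanish
    refine ⟨0, ?_⟩
    have hsum0 : (∑ j, LieG J (b1Fun N Rc ε δ ξ χ α J) (R, ω) j * (0 : Fin 3 → ℝ) j) = 0 := by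
      simp
    rw [hsum0]
    have hβ1 : 0 ≤ β (b1Fun N Rc ε δ ξ χ α J (R, ω)) := by
      have h := hβmono.monotone hb10
      rwa [hβ0] at h
    have hb0' : 0 ≤ χ (hBar N Rc ε δ R / ξ) := hb0
    have hh0 : 0 ≤ hBar N Rc ε δ R := by
      by_contra hneg
      push_neg at hneg
      have hmono : StrictMonoOn χ (Set.Iic (1:ℝ)) :=
        strictMonoOn_of_deriv_pos (convex_Iic 1) hχdiff.continuous.continuousOn
          (by intro x hx; rw [interior_Iic] at hx; exact hχ' x hx)
      have hlt : hBar N Rc ε δ R / ξ < 0 := div_neg_of_neg_of_pos hneg hξ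
      have hc := hmono (Set.mem_Iic.2 (by linarith)) (Set.mem_Iic.2 zero_le_one)
        (by linarith)
      rw [hχ0] at hc
      linarith
    have hge : ξ ≤ hBar N Rc ε δ R := by
      by_contra hlt'
      push_neg at hlt'
      have hq1 : hBar N Rc ε δ R / ξ < 1 := (div_lt_one hξ).2 hlt'
      have hcpos : 0 < deriv χ (hBar N Rc ε δ R / ξ) := hχ' _ hq1
      refine absurd (hsing R ω hSOR hh0 ?_) (not_le.2 hlt')
      intro j
      have h0 := hLG j
      simp only [LieG] at h0
      rw [hb1e] at h0
      rw [CBFAux.fderiv_section_Psi N Rc ε δ ξ χ α hχdiff hχdiff2 hαdiff R ω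
        (fun k => J⁻¹ k j)] at h0
      have hne : deriv χ (hBar N Rc ε δ R / ξ) * ξ⁻¹ ≠ 0 :=
        (mul_pos hcpos (inv_pos.2 hξ)).ne'
      have hLH0 : CBFAux.LH N Rc ε R (R * hat (fun k => J⁻¹ k j)) = 0 :=
        (mul_eq_zero.1 h0).resolve_left hne
      rw [CBFAux.LH_mulhat N Rc ε R (fun k => J⁻¹ k j)] at hLH0
      simpa using hLH0
    have hc0 : deriv χ (hBar N Rc ε δ R / ξ) = 0 :=
      hχconst _ ((one_le_div hξ).2 hge)
    have hc2 : deriv (deriv χ) (hBar N Rc ε δ R / ξ) = 0 :=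
      hχ2const _ ((one_le_div hξ).2 hge)
    have hz := (CBFAux.hasFDerivAt_Psi_zero N Rc ε δ ξ χ α hχdiff hχdiff2 hαdiff
      R ω hc0 hc2).fderiv
    have hLF : LieF J (b1Fun N Rc ε δ ξ χ α J) (R, ω) = 0 := by
      simp only [LieF]
      rw [hb1e, hz]
      simp
    rw [hLF]
    linarith
  · push_neg at hLG
    obtain ⟨j₀, hj₀⟩ := hLG
    set L : Fin 3 → ℝ := LieG J (b1Fun N Rc ε δ ξ χ α J) (R, ω) with hL
    set A : ℝ := LieF J (b1Fun N Rc ε δ ξ χ α J) (R, ω)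
      + β (b1Fun N Rc ε δ ξ χ α J (R, ω)) with hA
    set S : ℝ := ∑ j, (L j)^2 with hS
    have hSpos : 0 < S :=
      Finset.sum_pos' (fun j _ => sq_nonneg _) ⟨j₀, Finset.mem_univ _, by positivity⟩
    refine ⟨fun k => (|A| / S) * L k, ?_⟩
    have hsum : (∑ j, L j * ((|A| / S) * L j)) = |A| := by
      have h1 : (∑ j, L j * ((|A| / S) * L j)) = (|A| / S) * ∑ j, (L j)^2 := by
        rw [Finset.mul_sum]
        exact Finset.sum_congr rfl fun j _ => by ring
      rw [h1, ← hS, div_mul_cancel₀ _ hSpos.ne']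
    have hgoal : (∑ j, L j * ((|A| / S) * L j)) + LieF J (b1Fun N Rc ε δ ξ χ α J) (R, ω)
        + β (b1Fun N Rc ε δ ξ χ α J (R, ω)) = |A| + A := by
      rw [hsum, hA]; ring
    calc (0:ℝ) ≤ |A| + A := by linarith [neg_abs_le A]
    _ = _ := hgoal.symm
end
end
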